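/- arXiv:2406.07088 — 8 statements merged into one kernel-verified Lean document; each statement's English description precedes it below -/
import Mathlib

section
/- Let d ≥ 2, let P, Q ⊆ Fin K be disjoint subsets with |P| = |Q| = d, and define f(w) = ∏_{k ∈ P} w_k + ∏_{k ∈ Q} w_k (operations in ZMod 2). Fix n ∈ P and n' ∈ Q and set S' = (P \ {n}) ∪ {n'}. Then the joint influence of S' on f equals 2 · (1/2^{d-1}) · (1 − 1/2^{d-1}); equivalently, card {w : Fin K → ZMod 2 | f(w + 𝟙_{S'}) ≠ f(w)} = 2^{K-d+2} − 2^{K-2d+3}. -/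
open Finset

/-- Indicator vector of a finite set of coordinates: `(𝟙_S)_k = 1` iff `k ∈ S`. -/
def indVec {K : ℕ} (S : Finset (Fin K)) : Fin K → ZMod 2 :=
  fun k => if k ∈ S then 1 else 0

/-- Joint influence of the set `S` of coordinates on the Boolean function `f`:
the normalized count of inputs `w` for which flipping exactly the coordinates in `S`
changes the value of `f`. -/
def jointInf {K : ℕ} (S : Finset (Fin K)) (f : (Fin K → ZMod 2) → ZMod 2) : ℚ :=
  ((Finset.univ.filter fun w : Fin K → ZMod 2 => f (w + indVec S) ≠ f w).card : ℚ) / 2 ^ K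

/-!
Write `P = {n} ∪ P'` and `Q = {n'} ∪ Q'`. Flipping `S' = P' ∪ {n'}` changes `f` by
`w n · (∏_{P'} w + ∏_{P'} (w + 1)) + ∏_{Q'} w`, and the two products over `P'` are never both `1`.
So `f` changes exactly on the symmetric difference of `X = {w_P ≡ 1} ∪ {w_n = 1, w_{P'} ≡ 0}` and
`C = {w_{Q'} ≡ 1}`. Each of `X`, `C` and `X ∩ C` is a union of at most two disjoint cylinder sets,
a cylinder fixing the coordinates in `T` has `2^(K - #T)` points, and
`#(X ∆ C) = #X + #C - 2 #(X ∩ C)`.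
-/

open scoped symmDiff

section Cylinder

variable {ι α : Type*} [Fintype ι] [DecidableEq ι] [Fintype α] [DecidableEq α]

def cylinder (T : Finset ι) (v : ι → α) : Finset (ι → α) :=
  {w | ∀ k ∈ T, w k = v k}

@[simp]
lemma mem_cylinder {T : Finset ι} {v w : ι → α} : w ∈ cylinder T v ↔ ∀ k ∈ T, w k = v k := by
  simp [cylinder]

lemma cylinder_eq_piFinset (T : Finset ι) (v : ι → α) :
    cylinder T v = Fintype.piFinset fun k => if k ∈ T then {v k} else univ := by
  ext w
  simp only [mem_cylinder, Fintype.mem_piFinset]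
  refine forall_congr' fun k => ?_
  split_ifs <;> simp [*]

lemma card_cylinder (T : Finset ι) (v : ι → α) :
    #(cylinder T v) = Fintype.card α ^ (Fintype.card ι - #T) := by
  rw [cylinder_eq_piFinset, Fintype.card_piFinset, ← card_compl, ← prod_const]
  simp [apply_ite card, prod_ite, filter_notMem_eq_sdiff, compl_eq_univ_sdiff]

lemma cylinder_inter_cylinder {T U : Finset ι} (h : Disjoint T U) (v u : ι → α) :
    cylinder T v ∩ cylinder U u = cylinder (T ∪ U) (T.piecewise v u) := by
  ext w
  simp only [mem_inter, mem_cylinder, forall_mem_union]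
  refine and_congr (forall₂_congr fun k hk => by rw [T.piecewise_eq_of_mem _ _ hk])
    (forall₂_congr fun k hk => by rw [T.piecewise_eq_of_notMem _ _ (disjoint_right.mp h hk)])

lemma disjoint_cylinder {T : Finset ι} {v u : ι → α} {k : ι} (hk : k ∈ T) (hvu : v k ≠ u k) :
    Disjoint (cylinder T v) (cylinder T u) :=
  disjoint_left.mpr fun w hv hu => hvu <| by
    rw [← mem_cylinder.mp hv k hk, mem_cylinder.mp hu k hk]

lemma card_cylinder_union_cylinder {T : Finset ι} {v u : ι → α} {k : ι} (hk : k ∈ T)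
    (hvu : v k ≠ u k) :
    #(cylinder T v ∪ cylinder T u) = 2 * Fintype.card α ^ (Fintype.card ι - #T) := by
  rw [card_union_of_disjoint (disjoint_cylinder hk hvu), card_cylinder, card_cylinder, two_mul]

end Cylinder

lemma Finset.card_symmDiff_add_two_mul_card_inter {α : Type*} [DecidableEq α] (s t : Finset α) :
    #(s ∆ t) + 2 * #(s ∩ t) = #s + #t := by
  rw [symmDiff_def, sup_eq_union, card_union_of_disjoint disjoint_sdiff_sdiff, two_mul,
    ← card_sdiff_add_card_inter s t, ← card_sdiff_add_card_inter t s, inter_comm t s]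
  ring

lemma ZMod.two_prod_eq_one_iff {ι : Type*} (T : Finset ι) (g : ι → ZMod 2) :
    ∏ k ∈ T, g k = 1 ↔ ∀ k ∈ T, g k = 1 := by
  have hg : ∀ k, g k = if g k = 1 then 1 else 0 := fun k => by
    generalize g k = x
    revert x; decide
  rw [prod_congr rfl fun k _ => hg k, prod_boole]
  split_ifs with h <;> simpa using h

set_option synthInstance.maxSize 256 in
lemma ZMod.two_flip_ne_iff : ∀ x y a b c : ZMod 2, a * b = 0 →
    (x * b + (y + 1) * c ≠ x * a + y * c ↔ Xor (x = 1 ∧ a = 1 ∨ x = 1 ∧ b = 1) (c = 1)) := by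
  decide

lemma indVec_apply {K : ℕ} (S : Finset (Fin K)) (k : Fin K) :
    indVec S k = if k ∈ S then 1 else 0 := rfl

section Flip

variable {K : ℕ} {P Q : Finset (Fin K)} {n n' : Fin K}

lemma flip_ne_iff (hnP : n ∉ P) (hn'Q : n' ∉ Q) (hPQ : Disjoint (insert n P) (insert n' Q))
    (hP : P.Nonempty) (f : (Fin K → ZMod 2) → ZMod 2)
    (hf : ∀ w, f w = (∏ k ∈ insert n P, w k) + ∏ k ∈ insert n' Q, w k) (w : Fin K → ZMod 2) :
    f (w + indVec (P ∪ {n'})) ≠ f w ↔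
      Xor (w ∈ cylinder (insert n P) 1 ∨ w ∈ cylinder (insert n P) (indVec {n}))
        (w ∈ cylinder Q 1) := by
  have hnn' : n ≠ n' := fun h =>
    disjoint_left.mp hPQ (mem_insert_self n P) (h ▸ mem_insert_self _ _)
  have hQP : ∀ k ∈ Q, k ∉ P ∧ k ≠ n' := fun k hk =>
    ⟨fun h => disjoint_left.mp hPQ (mem_insert_of_mem h) (mem_insert_of_mem hk),
      fun h => hn'Q (h ▸ hk)⟩
  have hflipP : ∏ k ∈ P, (w + indVec (P ∪ {n'})) k = ∏ k ∈ P, (w k + 1) :=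
    prod_congr rfl fun k hk => by simp [indVec_apply, hk]
  have hflipQ : ∏ k ∈ Q, (w + indVec (P ∪ {n'})) k = ∏ k ∈ Q, w k :=
    prod_congr rfl fun k hk => by simp [indVec_apply, hQP k hk]
  obtain ⟨m, hm⟩ := hP
  have hconst : (∏ k ∈ P, w k) * ∏ k ∈ P, (w k + 1) = 0 := by
    rw [← prod_mul_distrib]
    refine prod_eq_zero hm ?_
    generalize w m = x
    revert x; decide
  have hflip_n : (w + indVec (P ∪ {n'})) n = w n := by simp [indVec_apply, hnP, hnn']
  have hflip_n' : (w + indVec (P ∪ {n'})) n' = w n' + 1 := by simp [indVec_apply]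
  rw [hf, hf, prod_insert hnP, prod_insert hnP, prod_insert hn'Q, prod_insert hn'Q, hflipP,
    hflipQ, hflip_n, hflip_n', ZMod.two_flip_ne_iff _ _ _ _ _ hconst, ZMod.two_prod_eq_one_iff,
    ZMod.two_prod_eq_one_iff, ZMod.two_prod_eq_one_iff]
  have hvec : (∀ k ∈ P, w k = indVec {n} k) ↔ ∀ k ∈ P, w k = 0 := forall₂_congr fun k hk => by
    simp [indVec_apply, ne_of_mem_of_not_mem hk hnP]
  simp only [mem_cylinder, forall_mem_insert, hvec, Pi.one_apply, add_eq_right]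
  simp [indVec_apply]

lemma card_filter_flip_ne_add (hnP : n ∉ P) (hn'Q : n' ∉ Q)
    (hPQ : Disjoint (insert n P) (insert n' Q)) (hP : P.Nonempty) (f : (Fin K → ZMod 2) → ZMod 2)
    (hf : ∀ w, f w = (∏ k ∈ insert n P, w k) + ∏ k ∈ insert n' Q, w k) :
    #{w | f (w + indVec (P ∪ {n'})) ≠ f w} + 4 * 2 ^ (K - #(insert n P ∪ Q))
      = 2 * 2 ^ (K - #(insert n P)) + 2 ^ (K - #Q) := by
  set X := cylinder (insert n P) 1 ∪ cylinder (insert n P) (indVec {n})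
  have hflip : ({w | f (w + indVec (P ∪ {n'})) ≠ f w} : Finset _) = X ∆ cylinder Q 1 := by
    ext w
    rw [mem_filter, flip_ne_iff hnP hn'Q hPQ hP f hf, mem_symmDiff, xor_def, mem_union]
    simp only [mem_univ, true_and]
  have hPQ' : Disjoint (insert n P) Q := hPQ.mono_right (subset_insert _ _)
  have hinter : X ∩ cylinder Q 1 = cylinder (insert n P ∪ Q) ((insert n P).piecewise 1 1) ∪
      cylinder (insert n P ∪ Q) ((insert n P).piecewise (indVec {n}) 1) := by
    rw [union_inter_distrib_right, cylinder_inter_cylinder hPQ', cylinder_inter_cylinder hPQ']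
  obtain ⟨m, hm⟩ := hP
  have hmP : m ∈ insert n P := mem_insert_of_mem hm
  have hm_ne : (1 : Fin K → ZMod 2) m ≠ indVec {n} m := by
    simp [indVec_apply, ne_of_mem_of_not_mem hm hnP]
  have hX := card_cylinder_union_cylinder hmP hm_ne
  have hXQ := card_cylinder_union_cylinder (mem_union_left Q hmP)
    (by rwa [piecewise_eq_of_mem _ _ _ hmP, piecewise_eq_of_mem _ _ _ hmP] :
      (insert n P).piecewise (1 : Fin K → ZMod 2) 1 m ≠ (insert n P).piecewise (indVec {n}) 1 m)
  have h := card_symmDiff_add_two_mul_card_inter X (cylinder Q (1 : Fin K → ZMod 2))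
  rw [← hflip, hinter, hXQ, hX, card_cylinder] at h
  simp only [ZMod.card, Fintype.card_fin] at h
  linarith

end Flip

lemma two_pow_sub_two_pow_div_two_pow {K d : ℕ} (hd : 1 ≤ d) (hK : 2 * d ≤ K) :
    ((2 ^ (K - d + 2) - 2 ^ (K - 2 * d + 3) : ℕ) : ℚ) / 2 ^ K
      = 2 * (1 / 2 ^ (d - 1)) * (1 - 1 / 2 ^ (d - 1)) := by
  obtain ⟨e, rfl⟩ : ∃ e, d = e + 1 := ⟨d - 1, by omega⟩
  obtain ⟨m, rfl⟩ : ∃ m, K = 2 * e + m + 2 := ⟨K - 2 * e - 2, by omega⟩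
  rw [show 2 * e + m + 2 - (e + 1) + 2 = e + m + 3 by omega,
    show 2 * e + m + 2 - 2 * (e + 1) + 3 = m + 3 by omega,
    Nat.cast_sub (Nat.pow_le_pow_right two_pos (by omega)), Nat.add_sub_cancel]
  push_cast
  field_simp
  ring

theorem stmt2 (K d : ℕ) (hd : 2 ≤ d)
    (P Q : Finset (Fin K)) (hPQ : Disjoint P Q) (hP : P.card = d) (hQ : Q.card = d)
    (f : (Fin K → ZMod 2) → ZMod 2)
    (hf : ∀ w, f w = (∏ k ∈ P, w k) + ∏ k ∈ Q, w k)
    (n n' : Fin K) (hn : n ∈ P) (hn' : n' ∈ Q) :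
    jointInf ((P \ {n}) ∪ {n'}) f = 2 * (1 / 2 ^ (d - 1)) * (1 - 1 / 2 ^ (d - 1)) ∧
    (Finset.univ.filter fun w : Fin K → ZMod 2 =>
        f (w + indVec ((P \ {n}) ∪ {n'})) ≠ f w).card
      = 2 ^ (K - d + 2) - 2 ^ (K - 2 * d + 3) := by
  obtain ⟨P, hnP, rfl⟩ : ∃ P', n ∉ P' ∧ P = insert n P' :=
    ⟨P.erase n, notMem_erase n P, (insert_erase hn).symm⟩
  obtain ⟨Q, hn'Q, rfl⟩ : ∃ Q', n' ∉ Q' ∧ Q = insert n' Q' :=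
    ⟨Q.erase n', notMem_erase n' Q, (insert_erase hn').symm⟩
  rw [insert_sdiff_of_mem _ (mem_singleton_self n), sdiff_singleton_eq_erase,
    erase_eq_of_notMem hnP]
  rw [card_insert_of_notMem hnP] at hP
  rw [card_insert_of_notMem hn'Q] at hQ
  have hK : 2 * d ≤ K := by
    have := card_le_univ (insert n P ∪ insert n' Q)
    rw [card_union_of_disjoint hPQ, card_insert_of_notMem hnP, card_insert_of_notMem hn'Q,
      Fintype.card_fin] at this
    omega
  have hcount := card_filter_flip_ne_add hnP hn'Q hPQ (card_pos.mp (by omega)) f hf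
  rw [card_union_of_disjoint (hPQ.mono_right (subset_insert _ _)), card_insert_of_notMem hnP,
    hP, show K - (d + #Q) = K - 2 * d + 1 by omega, show K - #Q = K - d + 1 by omega] at hcount
  have hcard :
      #{w | f (w + indVec (P ∪ {n'})) ≠ f w} = 2 ^ (K - d + 2) - 2 ^ (K - 2 * d + 3) := by
    rw [pow_add, pow_add]
    rw [pow_succ, pow_succ] at hcount
    omega
  exact ⟨by rw [jointInf, hcard]; exact two_pow_sub_two_pow_div_two_pow (by omega) hK, hcard⟩
end

section
/- Let d ≥ 2, let P, Q ⊆ Fin K be disjoint subsets with |P| = |Q| = d, and define f(w) = ∏_{k ∈ P} w_k + ∏_{k ∈ Q} w_k (operations in ZMod 2). Then for every nonempty subset S' ⊆ P ∪ Q, the joint influence of S' on f is at least the joint influence of P on f, and Inf_P(f) = 1/2^{d-1}; that is, Inf_{S'}(f) ≥ Inf_P(f) = 1/2^{d-1}. -/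
/-
Write `f = m_P + m_Q` with `m_T w = ∏_{k ∈ T} w_k`. Flipping the coordinates `S` changes `f` exactly
when it changes precisely one of `m_P`, `m_Q`. Flipping changes `m_T` on `2 · 2^{K - |T|}` inputs if
`S` meets `T` (namely where `w` or `w + 𝟙_S` is all ones on `T`) and on none otherwise. The two events
depend on the disjoint coordinate blocks `P` and `Q`, hence are independent, so with
`a = 2^{1-d}` the flip probability is `a` when `S` meets only one block and `2a - 2a² ≥ a`
(as `a ≤ 1/2`) when it meets both.
-/

open Finset

theorem card_filter_xor_add {α : Type*} (s : Finset α) (p q : α → Prop)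
    [DecidablePred p] [DecidablePred q] :
    #{x ∈ s | Xor (p x) (q x)} + 2 * #{x ∈ s | p x ∧ q x} = #{x ∈ s | p x} + #{x ∈ s | q x} := by
  simp only [card_filter, mul_sum, ← sum_add_distrib]
  refine sum_congr rfl fun x _ => ?_
  by_cases p x <;> by_cases q x <;> simp [*]

section PiFintype

variable {ι β : Type*} [Fintype ι] [DecidableEq ι] [Fintype β]

theorem card_filter_and_mul_card_eq_of_dependsOn {s : Finset ι} {p q : (ι → β) → Prop}
    [DecidablePred p] [DecidablePred q] (hp : DependsOn p s) (hq : DependsOn q (↑s)ᶜ) :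
    #{w | p w ∧ q w} * Fintype.card (ι → β) = #{w | p w} * #{w | q w} := by
  have hp' (x y : ι → β) : p (s.piecewise x y) = p x :=
    hp fun i hi => piecewise_eq_of_mem _ _ _ hi
  have hq' (x y : ι → β) : q (s.piecewise x y) = q y :=
    hq fun i hi => piecewise_eq_of_notMem _ _ _ hi
  -- `swap` is an involution carrying pairs `(x, y)` with `p x ∧ q y` to pairs `(u, _)` with
  -- `p u ∧ q u`: splice `x` on `s` with `y` off `s`.
  let swap (x : (ι → β) × (ι → β)) : (ι → β) × (ι → β) :=
    (s.piecewise x.1 x.2, s.piecewise x.2 x.1)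
  have swap_swap (x) : swap (swap x) = x := by
    ext i <;> by_cases hi : i ∈ s <;> simp [swap, hi]
  rw [← card_univ, ← card_product, ← card_product]
  refine card_nbij' swap swap ?_ ?_ (fun x _ => swap_swap x) (fun x _ => swap_swap x) <;>
    intro x hx <;> simp_all [swap]

theorem card_filter_forall_mem_eq [DecidableEq β] (T : Finset ι) (c : ι → β) :
    #{w : ι → β | ∀ i ∈ T, w i = c i} = Fintype.card β ^ #Tᶜ := by
  have : ({w : ι → β | ∀ i ∈ T, w i = c i} : Finset _) =
      Fintype.piFinset fun i => if i ∈ T then {c i} else univ := by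
    ext w; simp only [mem_filter, mem_univ, true_and, Fintype.mem_piFinset]
    refine forall_congr' fun i => ?_
    split_ifs with hi <;> simp [hi]
  rw [this, Fintype.card_piFinset]
  simp [apply_ite, prod_ite, ← compl_filter]

end PiFintype

theorem prod_zmod_two_eq_one_iff {ι : Type*} (T : Finset ι) (w : ι → ZMod 2) :
    ∏ i ∈ T, w i = 1 ↔ ∀ i ∈ T, w i = 1 := by
  have h (x : ZMod 2) : x = 1 ↔ x ≠ 0 := by revert x; decide
  simp only [h, prod_ne_zero_iff]

section BooleanMonomial

variable {ι : Type*} [Fintype ι] [DecidableEq ι]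

def flipSet (g : (ι → ZMod 2) → ZMod 2) (v : ι → ZMod 2) : Finset (ι → ZMod 2) :=
  {w | g (w + v) ≠ g w}

theorem card_filter_prod_eq_one (T : Finset ι) :
    #{w : ι → ZMod 2 | ∏ i ∈ T, w i = 1} = 2 ^ #Tᶜ := by
  simpa [prod_zmod_two_eq_one_iff] using card_filter_forall_mem_eq T (fun _ => (1 : ZMod 2))

theorem card_flipSet_prod {T : Finset ι} {v : ι → ZMod 2} (hv : ∃ i ∈ T, v i ≠ 0) :
    #(flipSet (fun w => ∏ i ∈ T, w i) v) = 2 * 2 ^ #Tᶜ := by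
  have not_both (w : ι → ZMod 2) : ¬(∏ i ∈ T, (w + v) i = 1 ∧ ∏ i ∈ T, w i = 1) := by
    simp only [prod_zmod_two_eq_one_iff, Pi.add_apply]
    rintro ⟨h1, h2⟩
    obtain ⟨i, hi, hvi⟩ := hv
    have := h1 i hi
    rw [h2 i hi] at this
    exact hvi (by simpa using this)
  have key (x y : ZMod 2) (h : ¬(x = 1 ∧ y = 1)) : x ≠ y ↔ x = 1 ∨ y = 1 := by
    revert x y; decide
  have shift : #{w : ι → ZMod 2 | ∏ i ∈ T, (w + v) i = 1} = #{w : ι → ZMod 2 | ∏ i ∈ T, w i = 1} :=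
    card_nbij' (· + v) (· - v) (by intro w hw; simpa using hw) (by intro w hw; simpa using hw)
      (by intro w _; simp) (by intro w _; simp)
  simp only [flipSet, key _ _ (not_both _), filter_or]
  rw [card_union_of_disjoint (disjoint_filter.2 fun w _ h1 h2 => not_both w ⟨h1, h2⟩), shift,
    card_filter_prod_eq_one, two_mul]

theorem dependsOn_mem_flipSet_prod (T : Finset ι) (v : ι → ZMod 2) :
    DependsOn (· ∈ flipSet (fun w => ∏ i ∈ T, w i) v) T := by
  intro x y h
  simp only [flipSet, mem_filter, mem_univ, true_and, Pi.add_apply]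
  rw [prod_congr rfl fun i hi => by rw [h i hi], prod_congr rfl h]

theorem card_flipSet_prod_add_prod {P Q : Finset ι} (hPQ : Disjoint P Q) (v : ι → ZMod 2) :
    #(flipSet (fun w => (∏ i ∈ P, w i) + ∏ i ∈ Q, w i) v) * 2 ^ Fintype.card ι
        + 2 * (#(flipSet (fun w => ∏ i ∈ P, w i) v) * #(flipSet (fun w => ∏ i ∈ Q, w i) v))
      = (#(flipSet (fun w => ∏ i ∈ P, w i) v) + #(flipSet (fun w => ∏ i ∈ Q, w i) v))
        * 2 ^ Fintype.card ι := by
  have hxor (x y x' y' : ZMod 2) : x + y ≠ x' + y' ↔ Xor (x ≠ x') (y ≠ y') := by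
    revert x y x' y'; decide
  have hindep := card_filter_and_mul_card_eq_of_dependsOn (dependsOn_mem_flipSet_prod P v)
    ((dependsOn_mem_flipSet_prod Q v).mono fun i hi hiP => disjoint_left.1 hPQ hiP hi)
  have hcount := card_filter_xor_add univ (· ∈ flipSet (fun w => ∏ i ∈ P, w i) v)
    (· ∈ flipSet (fun w => ∏ i ∈ Q, w i) v)
  simp only [filter_mem_eq_inter, univ_inter] at hindep hcount
  simp only [Fintype.card_fun, ZMod.card] at hindep
  have hflip : flipSet (fun w => (∏ i ∈ P, w i) + ∏ i ∈ Q, w i) v =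
      ({w | Xor (w ∈ flipSet (fun w => ∏ i ∈ P, w i) v) (w ∈ flipSet (fun w => ∏ i ∈ Q, w i) v)} :
        Finset _) := by
    ext w
    simp only [flipSet, mem_filter, mem_univ, true_and, Pi.add_apply, hxor]
  rw [hflip, ← hindep, ← hcount]
  ring

end BooleanMonomial

theorem jointInf_eq_card_flipSet {K : ℕ} (S : Finset (Fin K)) (f : (Fin K → ZMod 2) → ZMod 2) :
    jointInf S f = #(flipSet f (indVec S)) / 2 ^ K := rfl

theorem card_flipSet_prod_indVec {K : ℕ} (S T : Finset (Fin K)) :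
    #(flipSet (fun w => ∏ i ∈ T, w i) (indVec S)) =
      if Disjoint S T then 0 else 2 * 2 ^ (K - #T) := by
  split_ifs with hST
  · rw [card_eq_zero, flipSet, filter_eq_empty_iff]
    intro w _
    refine not_not.2 (prod_congr rfl fun i hi => ?_)
    simp [indVec, disjoint_right.1 hST hi]
  · obtain ⟨i, hiS, hiT⟩ := not_disjoint_iff.1 hST
    rw [card_flipSet_prod ⟨i, hiT, by simp [indVec, hiS]⟩, card_compl, Fintype.card_fin]

section TwoMonomials

variable {K : ℕ} {P Q : Finset (Fin K)}

theorem card_flipSet_prod_add_prod_indVec_self (hPQ : Disjoint P Q) (hP : P.Nonempty) :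
    #(flipSet (fun w => (∏ i ∈ P, w i) + ∏ i ∈ Q, w i) (indVec P)) = 2 * 2 ^ (K - #P) := by
  have h := card_flipSet_prod_add_prod hPQ (indVec P)
  simp only [card_flipSet_prod_indVec, Fintype.card_fin, hPQ, disjoint_self_iff_empty,
    hP.ne_empty, if_true, if_false, mul_zero, add_zero] at h
  exact Nat.eq_of_mul_eq_mul_right (by positivity) h

theorem le_card_flipSet_prod_add_prod_indVec (hPQ : Disjoint P Q) (hPQcard : #P = #Q)
    (hP : 2 ≤ #P) {S : Finset (Fin K)} (hS : S ⊆ P ∪ Q) (hne : S.Nonempty) :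
    2 * 2 ^ (K - #P) ≤ #(flipSet (fun w => (∏ i ∈ P, w i) + ∏ i ∈ Q, w i) (indVec S)) := by
  have h := card_flipSet_prod_add_prod hPQ (indVec S)
  simp only [card_flipSet_prod_indVec, Fintype.card_fin, ← hPQcard] at h
  set m := 2 * 2 ^ (K - #P)
  have hN : 0 < 2 ^ K := by positivity
  have hPK : #P ≤ K := (card_le_univ P).trans_eq (Fintype.card_fin K)
  have hm : 2 * m ≤ 2 ^ K := by
    calc 2 * m = 2 ^ (K - #P) * 2 ^ 2 := by ring
      _ ≤ 2 ^ (K - #P) * 2 ^ #P := by gcongr; norm_num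
      _ = 2 ^ K := by rw [← pow_add, Nat.sub_add_cancel hPK]
  have hSPQ : ¬(Disjoint S P ∧ Disjoint S Q) := fun h => hne.ne_empty <|
    (disjoint_self_iff_empty _).1 (disjoint_of_subset_right hS (disjoint_union_right.2 h))
  split_ifs at h with hSP hSQ hSQ
  · exact absurd ⟨hSP, hSQ⟩ hSPQ
  · exact (Nat.eq_of_mul_eq_mul_right hN (by simpa using h)).ge
  · exact (Nat.eq_of_mul_eq_mul_right hN (by simpa using h)).ge
  · nlinarith

end TwoMonomials

theorem stmt3 (K d : ℕ) (hd : 2 ≤ d)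
    (P Q : Finset (Fin K)) (hPQ : Disjoint P Q) (hP : P.card = d) (hQ : Q.card = d)
    (f : (Fin K → ZMod 2) → ZMod 2)
    (hf : ∀ w, f w = (∏ k ∈ P, w k) + ∏ k ∈ Q, w k)
    (S' : Finset (Fin K)) (hS' : S' ⊆ P ∪ Q) (hne : S'.Nonempty) :
    jointInf S' f ≥ jointInf P f ∧ jointInf P f = 1 / 2 ^ (d - 1) := by
  obtain rfl : f = fun w => (∏ k ∈ P, w k) + ∏ k ∈ Q, w k := funext hf
  have hdK : d ≤ K := hP ▸ (card_le_univ P).trans_eq (Fintype.card_fin K)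
  have hPcount := card_flipSet_prod_add_prod_indVec_self (Q := Q) hPQ (card_pos.1 (by omega))
  have hS'count := le_card_flipSet_prod_add_prod_indVec hPQ (hP.trans hQ.symm) (hP ▸ hd) hS' hne
  rw [jointInf_eq_card_flipSet, jointInf_eq_card_flipSet, hPcount, hP]
  rw [hP] at hS'count
  refine ⟨by gcongr, ?_⟩
  rw [div_eq_div_iff (by positivity) (by positivity), one_mul, Nat.cast_mul, Nat.cast_pow,
    Nat.cast_ofNat, mul_right_comm, ← pow_succ', ← pow_add]
  congr 1
  omega
end

section
/- Let N ≥ 1, M ≥ 2, K = N·M, and let P_1, …, P_N be pairwise disjoint subsets of Fin K with |P_j| = M for all j whose union is all of Fin K. Define f(w) = Σ_{j=1}^N ∏_{k ∈ P_j} w_k (operations in ZMod 2). Then for every nonempty S ⊆ Fin K, letting r = card {j ∈ [N] : S ∩ P_j ≠ ∅}, the joint influence of S on f equals (1 − (1 − 2^{2−M})^r)/2. -/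
/-!
With `χ a = (-1) ^ a`, the joint influence is `(1 - 𝔼_w χ (f (w + 𝟙_S) - f w)) / 2`. The
derivative `f (w + 𝟙_S) - f w` is a sum of one term per block, depending only on the coordinates
in that block, so the expectation factors over the blocks. A block missing `S` contributes `1`.
On a block meeting `S`, the term `∏ (y + s) - ∏ y` is nonzero exactly at the two points `y = 1`
and `y = 1 - s`, so the block contributes `1 - 4 / 2 ^ M = 1 - 2 ^ (2 - M)`.
-/

open Finset

open Function
open scoped BigOperators

def parityChar (a : ZMod 2) : ℚ := (-1) ^ a.val

lemma parityChar_add (a b : ZMod 2) : parityChar (a + b) = parityChar a * parityChar b := by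
  rw [parityChar, ZMod.val_add, ← neg_one_pow_eq_pow_mod_two, pow_add, parityChar, parityChar]

lemma parityChar_sum {ι : Type*} (s : Finset ι) (v : ι → ZMod 2) :
    parityChar (∑ i ∈ s, v i) = ∏ i ∈ s, parityChar (v i) := by
  induction s using Finset.cons_induction with
  | empty => simp [parityChar]
  | cons a s ha ih => rw [sum_cons, prod_cons, parityChar_add, ih]

lemma expect_parityChar {α : Type*} [Fintype α] [Nonempty α] (g : α → ZMod 2) :
    𝔼 x, parityChar (g x) = 1 - 2 * #{x | g x ≠ 0} / Fintype.card α := by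
  have h (a : ZMod 2) : parityChar a = 1 - 2 * if a ≠ 0 then 1 else 0 := by
    obtain rfl | rfl : a = 0 ∨ a = 1 := by revert a; decide
    all_goals norm_num [parityChar, ZMod.val_one]
  simp only [h, Fintype.expect_eq_sum_div_card, sum_sub_distrib, ← mul_sum, sum_boole]
  field_simp
  simp

lemma prod_zmodTwo_eq_ite {α : Type*} [Fintype α] [DecidableEq α] (y : α → ZMod 2) :
    ∏ a, y a = if y = 1 then 1 else 0 := by
  split_ifs with h
  · simp [h]
  · obtain ⟨a, ha⟩ := Function.ne_iff.mp h
    have h01 : ∀ b : ZMod 2, b ≠ 1 → b = 0 := by decide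
    exact prod_eq_zero (mem_univ a) (h01 _ ha)

lemma expect_parityChar_prod_add_sub_prod {α : Type*} [Fintype α] [DecidableEq α]
    (s : α → ZMod 2) :
    𝔼 y : α → ZMod 2, parityChar (∏ a, (y a + s a) - ∏ a, y a) =
      if s = 0 then 1 else 1 - 4 / 2 ^ Fintype.card α := by
  split_ifs with hs
  · simp [hs, parityChar]
  have hne : 1 - s ≠ 1 := by simpa using hs
  have hsupp (y : α → ZMod 2) :
      ∏ a, (y a + s a) - ∏ a, y a ≠ 0 ↔ y ∈ ({1 - s, 1} : Finset _) := by
    rw [← Pi.add_def, prod_zmodTwo_eq_ite (y + s), prod_zmodTwo_eq_ite y]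
    simp only [← eq_sub_iff_add_eq]
    by_cases h1 : y = 1 - s <;> by_cases h2 : y = 1 <;> simp_all [eq_comm]
  rw [expect_parityChar, filter_congr fun y _ => hsupp y, filter_mem_eq_inter, univ_inter,
    card_pair hne, Fintype.card_fun, ZMod.card]
  push_cast
  ring

section Partition

variable {ι κ R : Type*} {P : κ → Finset ι}

noncomputable def piEquivPiFinsetOfPartition (hdisj : Pairwise (Disjoint on P))
    (hcover : ∀ i, ∃ j, i ∈ P j) : (ι → R) ≃ ∀ j, P j → R where
  toFun w _ i := w i
  invFun x i := x (hcover i).choose ⟨i, (hcover i).choose_spec⟩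
  left_inv _ := rfl
  right_inv x := by
    funext j ⟨i, hi⟩
    suffices ∀ j' (hj' : i ∈ P j'), x j' ⟨i, hj'⟩ = x j ⟨i, hi⟩ from this _ _
    intro j' hj'
    obtain rfl : j' = j := hdisj.eq (not_disjoint_iff.mpr ⟨i, hj', hi⟩)
    rfl

lemma expect_prod_restrict_eq_prod_expect {𝕜 : Type*} [Semifield 𝕜] [CharZero 𝕜]
    [Fintype ι] [DecidableEq ι] [Fintype κ] [DecidableEq κ] [Fintype R]
    (hdisj : Pairwise (Disjoint on P)) (hcover : ∀ i, ∃ j, i ∈ P j)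
    (G : ∀ j, (P j → R) → 𝕜) :
    𝔼 w : ι → R, ∏ j, G j (fun i => w i) = ∏ j, 𝔼 y, G j y := by
  rw [Fintype.expect_equiv (piEquivPiFinsetOfPartition hdisj hcover)
    (fun w => ∏ j, G j fun i => w i) (fun x => ∏ j, G j (x j)) fun _ => rfl]
  simp only [Fintype.expect_eq_sum_div_card, ← Fintype.prod_sum, Fintype.card_pi, Nat.cast_prod,
    prod_div_distrib]

end Partition

theorem stmt5_general (N M K : ℕ)
    (P : Fin N → Finset (Fin K))
    (hdisj : ∀ i j, i ≠ j → Disjoint (P i) (P j))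
    (hcard : ∀ j, (P j).card = M)
    (hcover : (Finset.univ : Finset (Fin N)).biUnion P = Finset.univ)
    (f : (Fin K → ZMod 2) → ZMod 2)
    (hf : ∀ w, f w = ∑ j : Fin N, ∏ k ∈ P j, w k)
    (S : Finset (Fin K)) :
    jointInf S f =
      (1 - (1 - (2 : ℚ) ^ ((2 : ℤ) - (M : ℤ)))
        ^ (Finset.univ.filter fun j : Fin N => (S ∩ P j).Nonempty).card) / 2 := by
  set s := indVec S
  have hcover_mem (k : Fin K) : ∃ j, k ∈ P j := by simpa using hcover.ge (mem_univ k)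
  have hblock (j : Fin N) : 𝔼 y : P j → ZMod 2, parityChar (∏ k, (y k + s k) - ∏ k, y k) =
      if (S ∩ P j).Nonempty then 1 - 4 / 2 ^ M else 1 := by
    have hs : (fun k : P j => s k) = 0 ↔ ¬(S ∩ P j).Nonempty := by
      simp only [s, indVec, funext_iff, Pi.zero_apply, ite_eq_right_iff, one_ne_zero, imp_false,
        not_nonempty_iff_eq_empty, ← disjoint_iff_inter_eq_empty, disjoint_right, Subtype.forall]
    rw [expect_parityChar_prod_add_sub_prod, Fintype.card_coe, hcard]
    simp only [hs, ite_not]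
  have hpow : (4 : ℚ) / 2 ^ M = 2 ^ ((2 : ℤ) - M) := by
    rw [zpow_sub₀ two_ne_zero]
    norm_num
  calc jointInf S f = (1 - 𝔼 w, parityChar (f (w + s) - f w)) / 2 := by
        rw [expect_parityChar]
        simp [jointInf, sub_ne_zero]
        ring
    _ = (1 - ∏ j, 𝔼 y : P j → ZMod 2, parityChar (∏ k, (y k + s k) - ∏ k, y k)) / 2 := by
        rw [← expect_prod_restrict_eq_prod_expect hdisj hcover_mem]
        simp only [hf, ← sum_sub_distrib, parityChar_sum, Pi.add_apply, ← prod_coe_sort (P _)]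
    _ = _ := by simp only [hblock, prod_ite, prod_const, one_pow, mul_one, hpow]

theorem stmt5 (N M K : ℕ) (hN : 1 ≤ N) (hM : 2 ≤ M) (hK : K = N * M)
    (P : Fin N → Finset (Fin K))
    (hdisj : ∀ i j, i ≠ j → Disjoint (P i) (P j))
    (hcard : ∀ j, (P j).card = M)
    (hcover : (Finset.univ : Finset (Fin N)).biUnion P = Finset.univ)
    (f : (Fin K → ZMod 2) → ZMod 2)
    (hf : ∀ w, f w = ∑ j : Fin N, ∏ k ∈ P j, w k)
    (S : Finset (Fin K)) (hS : S.Nonempty) :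
    jointInf S f =
      (1 - (1 - (2 : ℚ) ^ ((2 : ℤ) - (M : ℤ)))
        ^ (Finset.univ.filter fun j : Fin N => (S ∩ P j).Nonempty).card) / 2 :=
  stmt5_general N M K P hdisj hcard hcover f hf S
end

section
/- Let N ≥ 1, M ≥ 2, K = N·M, and let P_1, …, P_N be pairwise disjoint subsets of Fin K with |P_j| = M for all j whose union is all of Fin K. Define f(w) = Σ_{j=1}^N ∏_{k ∈ P_j} w_k (operations in ZMod 2). Then for every nonempty S ⊆ Fin K, the joint influence of S on f satisfies Inf_S(f) ≥ 1/2^{M−1}. -/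
open Finset

/-! Choose a block `Q = P j` meeting `S` and put `t = 𝟙_S`. Over `ZMod 2`, `f (w + t) ≠ f w` iff
the derivative `∏_Q (w + t) + ∏_Q w` of the block `Q` differs from the sum of the derivatives of
the other blocks, which only reads the coordinates of `w` outside `Q`. The derivative of the AND
of the bits in `Q` in the nonzero direction `t|_Q` is the indicator of `{1, 1 + t|_Q}`, so it
takes each value at least `min (2, 2 ^ M - 2) = 2` times. Hence every one of the `2 ^ (K - M)`
assignments outside `Q` has at least two completions flipping `f`. -/

theorem mul_card_pow_le_card_filter_restrict {ι β : Type*} [Fintype ι] [DecidableEq ι]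
    [Fintype β] (Q : Finset ι)
    (G : (Q → β) → ({i // i ∉ Q} → β) → Prop) [∀ x y, Decidable (G x y)] (m : ℕ)
    (hG : ∀ y, m ≤ #{x | G x y}) :
    m * Fintype.card β ^ (Fintype.card ι - #Q) ≤
      #{w : ι → β | G (fun i => w i) (fun i => w i)} := by
  have hsplit : #{w : ι → β | G (fun i => w i) (fun i => w i)} =
      #{p : (Q → β) × ({i // i ∉ Q} → β) | G p.1 p.2} :=
    card_equiv (Equiv.piEquivPiSubtypeProd (· ∈ Q) fun _ => β) (by simp)
  rw [hsplit, card_filter, Fintype.sum_prod_type_right]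
  calc m * Fintype.card β ^ (Fintype.card ι - #Q)
      = ∑ _y : {i // i ∉ Q} → β, m := by
        simp [Fintype.card_subtype_compl, mul_comm]
    _ ≤ _ := sum_le_sum fun y _ => by simpa only [card_filter] using hG y

section
variable {α : Type*} [Fintype α]

theorem ZMod.prod_two_eq_ite (x : α → ZMod 2) :
    ∏ i, x i = if x = 1 then 1 else 0 := by
  split_ifs with hx
  · simp [hx]
  · obtain ⟨i, hi⟩ : ∃ i, x i ≠ 1 := by simpa [funext_iff] using hx
    exact prod_eq_zero (mem_univ i) (by revert hi; generalize x i = a; decide +revert)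

theorem prod_add_prod_eq_one_iff {t : α → ZMod 2} (ht : t ≠ 0) (x : α → ZMod 2) :
    ∏ i, (x + t) i + ∏ i, x i = 1 ↔ x = 1 ∨ x = 1 + t := by
  have hshift : x + t = 1 ↔ x = 1 + t := by
    rw [← eq_sub_iff_add_eq, sub_eq_add_neg,
      show -t = t from funext fun i => ZMod.neg_eq_self_mod_two _]
  rw [ZMod.prod_two_eq_ite, ZMod.prod_two_eq_ite, ← hshift]
  by_cases h₁ : x + t = 1 <;> by_cases h₂ : x = 1 <;> simp_all

variable [DecidableEq α]

theorem filter_prod_add_prod_eq_one {t : α → ZMod 2} (ht : t ≠ 0) :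
    ({x | ∏ i, (x + t) i + ∏ i, x i = 1} : Finset (α → ZMod 2)) = {1, 1 + t} := by
  ext x
  rw [mem_filter, prod_add_prod_eq_one_iff ht]
  simp

theorem two_le_card_filter_prod_add_prod_ne (hα : 2 ≤ Fintype.card α) {t : α → ZMod 2}
    (ht : t ≠ 0) (c : ZMod 2) : 2 ≤ #{x : α → ZMod 2 | ∏ i, (x + t) i + ∏ i, x i ≠ c} := by
  have hpair : #{(1 : α → ZMod 2), 1 + t} = 2 := card_pair (by simpa [eq_comm] using ht)
  obtain rfl | rfl : c = 0 ∨ c = 1 := by decide +revert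
  · have hne : ∀ a : ZMod 2, a ≠ 0 ↔ a = 1 := by decide
    simp only [hne, filter_prod_add_prod_eq_one ht, hpair, le_refl]
  · rw [filter_not, filter_prod_add_prod_eq_one ht, ← compl_eq_univ_sdiff, card_compl, hpair,
      Fintype.card_fun, ZMod.card]
    have : 2 ^ 2 ≤ 2 ^ Fintype.card α := Nat.pow_le_pow_right two_pos hα
    omega
end

theorem two_mul_two_pow_le_card_sum_prod_add_ne {ι κ : Type*} [Fintype ι] [DecidableEq ι]
    [Fintype κ] [DecidableEq κ] (P : κ → Finset ι) (j : κ)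
    (hdisj : ∀ i, i ≠ j → Disjoint (P i) (P j)) (hj : 2 ≤ #(P j))
    (t : ι → ZMod 2) (ht : ∃ k ∈ P j, t k ≠ 0) :
    2 * 2 ^ (Fintype.card ι - #(P j)) ≤
      #{w : ι → ZMod 2 | ∑ i, ∏ k ∈ P i, (w + t) k ≠ ∑ i, ∏ k ∈ P i, w k} := by
  set Q := P j
  let d (i : κ) (w : ι → ZMod 2) : ZMod 2 := ∏ k ∈ P i, (w + t) k + ∏ k ∈ P i, w k
  let extend (y : {k // k ∉ Q} → ZMod 2) (k : ι) : ZMod 2 := if h : k ∈ Q then 0 else y ⟨k, h⟩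
  have hsplit (w : ι → ZMod 2) : ∑ i, ∏ k ∈ P i, (w + t) k ≠ ∑ i, ∏ k ∈ P i, w k ↔
      ∏ k : Q, (w + t) k + ∏ k : Q, w k ≠ ∑ i ∈ univ.erase j, d i (extend fun k => w k) := by
    have hrest : ∑ i ∈ univ.erase j, d i w = ∑ i ∈ univ.erase j, d i (extend fun k => w k) := by
      refine sum_congr rfl fun i hi => ?_
      have hout : ∀ k ∈ P i, extend (fun k => w k) k = w k := fun k hk =>
        dif_neg (disjoint_left.mp (hdisj i (ne_of_mem_erase hi)) hk)
      simp only [d, Pi.add_apply]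
      congr 1 <;> exact prod_congr rfl fun k hk => by rw [hout k hk]
    rw [← hrest, prod_coe_sort Q fun k => (w + t) k, prod_coe_sort Q, Ne, ← CharTwo.add_eq_zero,
      ← sum_add_distrib, ← add_sum_erase _ _ (mem_univ j), CharTwo.add_eq_zero]
  have hQt : (fun k : Q => t k) ≠ 0 := by
    obtain ⟨k, hkQ, hk⟩ := ht
    exact fun h => hk (congrFun h ⟨k, hkQ⟩)
  calc 2 * 2 ^ (Fintype.card ι - #Q)
      ≤ #{w : ι → ZMod 2 | ∏ k : Q, (w + t) k + ∏ k : Q, w k ≠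
          ∑ i ∈ univ.erase j, d i (extend fun k => w k)} := by
        simpa using mul_card_pow_le_card_filter_restrict Q
          (fun x y => ∏ k, (x + fun k : Q => t k) k + ∏ k, x k ≠
            ∑ i ∈ univ.erase j, d i (extend y)) 2
          fun y => two_le_card_filter_prod_add_prod_ne (by simpa using hj) hQt _
    _ = _ := by
        congr 1
        exact filter_congr fun w _ => (hsplit w).symm

theorem stmt6 (N M K : ℕ) (hN : 1 ≤ N) (hM : 2 ≤ M) (hK : K = N * M)
    (P : Fin N → Finset (Fin K))
    (hdisj : ∀ i j, i ≠ j → Disjoint (P i) (P j))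
    (hcard : ∀ j, (P j).card = M)
    (hcover : (Finset.univ : Finset (Fin N)).biUnion P = Finset.univ)
    (f : (Fin K → ZMod 2) → ZMod 2)
    (hf : ∀ w, f w = ∑ j : Fin N, ∏ k ∈ P j, w k)
    (S : Finset (Fin K)) (hS : S.Nonempty) :
    jointInf S f ≥ 1 / 2 ^ (M - 1) := by
  obtain ⟨k, hkS⟩ := hS
  obtain ⟨j, -, hkj⟩ := mem_biUnion.mp (hcover ▸ mem_univ k)
  have hflip : ∃ k ∈ P j, indVec S k ≠ 0 := ⟨k, hkj, by simp [indVec, hkS]⟩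
  have hcount := two_mul_two_pow_le_card_sum_prod_add_ne P j (fun i hi => hdisj i j hi)
    (by rw [hcard]; exact hM) (indVec S) hflip
  simp only [← hf, hcard, Fintype.card_fin] at hcount
  have hMK : M ≤ K := hK ▸ Nat.le_mul_of_pos_left M hN
  have hpow : (2 : ℚ) ^ K = 2 * 2 ^ (K - M) * 2 ^ (M - 1) := by
    rw [mul_assoc, ← pow_add, ← pow_succ']
    congr 1
    omega
  rw [jointInf, ge_iff_le, div_le_div_iff₀ (by positivity) (by positivity), one_mul, hpow]
  gcongr
  exact_mod_cast hcount
end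

section
/- Let N ≥ 1, M ≥ 1, K = N·M, and let P_1, …, P_N be pairwise disjoint subsets of Fin K with |P_j| = M for all j whose union is all of Fin K. Define f(w) = Σ_{j=1}^N ∏_{k ∈ P_j} w_k (operations in ZMod 2). Then for every n ∈ [N], the joint influence of P_n on f equals 1/2^{M−1}, and consequently the average joint sensitivity of the placement configuration S* = (P_1, …, P_N) satisfies as_{S*}(f) = Σ_{n=1}^N Inf_{P_n}(f) = N/2^{M−1}. -/
open Finset

/-! Flipping the block `P n` changes only the summand `∏_{k ∈ P n} w k`, which then becomes
`∏_{k ∈ P n} (w k + 1)`. Over `ZMod 2` these two products differ exactly when `w` is constant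
on `P n`, and `w` is constant on a block of size `M` for `2 · 2^(K - M)` of the `2^K` inputs. -/

theorem card_filter_forall_mem_eq_s7 {ι α : Type*} [Fintype ι] [DecidableEq ι] [Fintype α]
    (S : Finset ι) (c : α) [DecidablePred fun w : ι → α => ∀ k ∈ S, w k = c] :
    #{w : ι → α | ∀ k ∈ S, w k = c} = Fintype.card α ^ (Fintype.card ι - #S) := by
  have hpi : ({w : ι → α | ∀ k ∈ S, w k = c} : Finset (ι → α))
      = Fintype.piFinset fun k => if k ∈ S then {c} else univ := by
    ext w
    simp only [mem_filter, mem_univ, true_and, Fintype.mem_piFinset]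
    refine forall_congr' fun k => ?_
    by_cases hk : k ∈ S <;> simp [hk]
  rw [hpi, Fintype.card_piFinset, ← card_compl]
  simp only [apply_ite card, card_singleton, card_univ, prod_ite, prod_const_one, one_mul,
    prod_const, filter_not, filter_mem_eq_inter, univ_inter, compl_eq_univ_sdiff]

namespace ZMod

theorem prod_eq_one_iff {ι : Type*} (S : Finset ι) (x : ι → ZMod 2) :
    ∏ k ∈ S, x k = 1 ↔ ∀ k ∈ S, x k = 1 := by
  have eq_one_iff : ∀ a : ZMod 2, a = 1 ↔ a ≠ 0 := by decide
  simp only [eq_one_iff, ne_eq, prod_eq_zero_iff, not_exists, not_and]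

theorem prod_add_one_ne_prod_iff {ι : Type*} {S : Finset ι} (hS : S.Nonempty)
    (x : ι → ZMod 2) :
    ∏ k ∈ S, (x k + 1) ≠ ∏ k ∈ S, x k ↔ (∀ k ∈ S, x k = 0) ∨ ∀ k ∈ S, x k = 1 := by
  have add_one_eq_one : ∀ a : ZMod 2, a + 1 = 1 ↔ a = 0 := by decide
  have ne_iff : ∀ a b : ZMod 2, ¬(a = 1 ∧ b = 1) → (a ≠ b ↔ a = 1 ∨ b = 1) := by decide
  have not_both : ¬(∏ k ∈ S, (x k + 1) = 1 ∧ ∏ k ∈ S, x k = 1) := by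
    rintro ⟨h0, h1⟩
    rw [prod_eq_one_iff] at h0 h1
    obtain ⟨k, hk⟩ := hS
    exact zero_ne_one (((add_one_eq_one _).mp (h0 k hk)).symm.trans (h1 k hk))
  rw [ne_iff _ _ not_both, prod_eq_one_iff, prod_eq_one_iff]
  simp only [add_one_eq_one]

end ZMod

theorem add_indVec_apply_of_notMem {K : ℕ} {S : Finset (Fin K)} (w : Fin K → ZMod 2)
    {k : Fin K} (hk : k ∉ S) : (w + indVec S) k = w k := by
  simp [indVec, hk]

theorem add_indVec_apply_of_mem {K : ℕ} {S : Finset (Fin K)} (w : Fin K → ZMod 2)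
    {k : Fin K} (hk : k ∈ S) : (w + indVec S) k = w k + 1 := by
  simp [indVec, hk]

theorem jointInf_prod_add {K : ℕ} {S : Finset (Fin K)} (hS : S.Nonempty)
    (f h : (Fin K → ZMod 2) → ZMod 2) (hf : ∀ w, f w = ∏ k ∈ S, w k + h w)
    (hh : ∀ w, h (w + indVec S) = h w) :
    jointInf S f = 1 / 2 ^ (#S - 1) := by
  have hflip : ({w | f (w + indVec S) ≠ f w} : Finset (Fin K → ZMod 2))
      = univ.filter (fun w => ∀ k ∈ S, w k = 0) ∪ univ.filter fun w => ∀ k ∈ S, w k = 1 := by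
    rw [← filter_or]
    refine filter_congr fun w _ => ?_
    have hprod : ∏ k ∈ S, (w + indVec S) k = ∏ k ∈ S, (w k + 1) :=
      prod_congr rfl fun k hk => add_indVec_apply_of_mem w hk
    rw [hf, hf, hh, hprod, ne_eq, add_left_inj, ← ne_eq, ZMod.prod_add_one_ne_prod_iff hS]
  have hdisj : Disjoint (univ.filter fun w : Fin K → ZMod 2 => ∀ k ∈ S, w k = 0)
      (univ.filter fun w => ∀ k ∈ S, w k = 1) := by
    refine disjoint_filter.mpr fun w _ h0 h1 => ?_
    obtain ⟨k, hk⟩ := hS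
    exact zero_ne_one ((h0 k hk).symm.trans (h1 k hk))
  have hSK : #S ≤ K := by simpa using card_le_univ S
  have hS1 : 1 ≤ #S := hS.card_pos
  unfold jointInf
  rw [hflip, card_union_of_disjoint hdisj, card_filter_forall_mem_eq_s7,
    card_filter_forall_mem_eq_s7, ZMod.card, Fintype.card_fin]
  push_cast
  rw [div_eq_div_iff (by positivity) (by positivity), one_mul, ← two_mul, ← pow_succ',
    ← pow_add]
  congr 1
  omega

theorem stmt7_general (N M K : ℕ) (hM : 1 ≤ M)
    (P : Fin N → Finset (Fin K))
    (hdisj : ∀ i j, i ≠ j → Disjoint (P i) (P j))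
    (hcard : ∀ j, (P j).card = M)
    (f : (Fin K → ZMod 2) → ZMod 2)
    (hf : ∀ w, f w = ∑ j : Fin N, ∏ k ∈ P j, w k) :
    (∀ n : Fin N, jointInf (P n) f = 1 / 2 ^ (M - 1)) ∧
    (∑ n : Fin N, jointInf (P n) f) = N / 2 ^ (M - 1) := by
  have hinf : ∀ n : Fin N, jointInf (P n) f = 1 / 2 ^ (M - 1) := by
    intro n
    have hPn : (P n).Nonempty := card_pos.mp (by rw [hcard]; exact hM)
    have hrest : ∀ w : Fin K → ZMod 2, ∑ j ∈ univ.erase n, ∏ k ∈ P j, (w + indVec (P n)) k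
        = ∑ j ∈ univ.erase n, ∏ k ∈ P j, w k := fun w =>
      sum_congr rfl fun j hj => prod_congr rfl fun k hk => add_indVec_apply_of_notMem w
        (disjoint_left.mp (hdisj j n (ne_of_mem_erase hj)) hk)
    rw [← hcard n]
    exact jointInf_prod_add hPn f _ (fun w => by rw [hf, ← add_sum_erase _ _ (mem_univ n)])
      hrest
  refine ⟨hinf, ?_⟩
  rw [sum_congr rfl fun n _ => hinf n, sum_const, card_univ, Fintype.card_fin, nsmul_eq_mul,
    mul_one_div]

theorem stmt7 (N M K : ℕ) (hN : 1 ≤ N) (hM : 1 ≤ M) (hK : K = N * M)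
    (P : Fin N → Finset (Fin K))
    (hdisj : ∀ i j, i ≠ j → Disjoint (P i) (P j))
    (hcard : ∀ j, (P j).card = M)
    (hcover : (Finset.univ : Finset (Fin N)).biUnion P = Finset.univ)
    (f : (Fin K → ZMod 2) → ZMod 2)
    (hf : ∀ w, f w = ∑ j : Fin N, ∏ k ∈ P j, w k) :
    (∀ n : Fin N, jointInf (P n) f = 1 / 2 ^ (M - 1)) ∧
    (∑ n : Fin N, jointInf (P n) f) = N / 2 ^ (M - 1) :=
  stmt7_general N M K hM P hdisj hcard f hf
end

section
/- Let N ≥ 1, M ≥ 1, K = N·M, and let P_1, …, P_N be pairwise disjoint subsets of Fin K with |P_j| = M for all j whose union is all of Fin K. Define f(w) = Σ_{j=1}^N ∏_{k ∈ P_j} w_k (operations in ZMod 2). Then for every placement configuration S = (S_1, …, S_N), where each S_n ⊆ Fin K has cardinality |S_n| = M, the average joint sensitivity satisfies as_S(f) = Σ_{n=1}^N Inf_{S_n}(f) ≥ N/2^{M−1}. -/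
open Finset

lemma zmod2_ne_iff (a b : ZMod 2) : a ≠ b ↔ a + b = 1 := by revert a b; decide

/-- Extension of a function on the complement of `T` by zero on `T`. -/
def extZ {K : ℕ} (T : Finset (Fin K)) (u : {k : Fin K // k ∉ T} → ZMod 2) : Fin K → ZMod 2 :=
  fun k => if h : k ∈ T then 0 else u ⟨k, h⟩

/-- Contribution of blocks other than `j`. -/
def cFun {N K : ℕ} (P : Fin N → Finset (Fin K)) (S : Finset (Fin K)) (j : Fin N)
    (w : Fin K → ZMod 2) : ZMod 2 :=
  ∑ i ∈ Finset.univ.erase j, ((∏ k ∈ P i, (w k + indVec S k)) + ∏ k ∈ P i, w k)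

/-- The injection used for the counting argument. -/
def phi {N K : ℕ} (P : Fin N → Finset (Fin K)) (S : Finset (Fin K)) (j : Fin N)
    (p : ZMod 2 × ({k : Fin K // k ∉ P j} → ZMod 2)) : Fin K → ZMod 2 :=
  fun k => if h : k ∈ P j then
      (1 + cFun P S j (extZ (P j) p.2)) * (1 + indVec S k) + p.1 * indVec S k
    else p.2 ⟨k, h⟩

lemma zmod2_cases (x : ZMod 2) : x = 0 ∨ x = 1 := by revert x; decide

lemma key {N K M : ℕ} (hM : 1 ≤ M) (hMK : M ≤ K)
    (P : Fin N → Finset (Fin K))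
    (hdisj : ∀ i j, i ≠ j → Disjoint (P i) (P j))
    (hcard : ∀ j, (P j).card = M)
    (hcover : (Finset.univ : Finset (Fin N)).biUnion P = Finset.univ)
    (f : (Fin K → ZMod 2) → ZMod 2)
    (hf : ∀ w, f w = ∑ j : Fin N, ∏ k ∈ P j, w k)
    (S : Finset (Fin K)) (hS : S.card = M) :
    (2 ^ (K - M + 1) : ℕ) ≤
      (Finset.univ.filter fun w : Fin K → ZMod 2 => f (w + indVec S) ≠ f w).card := by
  classical
  have hSne : S.Nonempty := Finset.card_pos.mp (by omega)
  obtain ⟨k₀, hk₀S⟩ := hSne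
  have hk₀' : k₀ ∈ (Finset.univ : Finset (Fin N)).biUnion P := hcover ▸ Finset.mem_univ k₀
  obtain ⟨j, -, hk₀P⟩ := Finset.mem_biUnion.mp hk₀'
  have hind0 : indVec S k₀ = 1 := by simp [indVec, hk₀S]
  have hnotPj : ∀ i, i ≠ j → ∀ k ∈ P i, k ∉ P j :=
    fun i hi k hk => Finset.disjoint_left.mp (hdisj i j hi) hk
  -- decomposition of the sensitivity condition
  have hdec : ∀ w : Fin K → ZMod 2, f (w + indVec S) + f w =
      ((∏ k ∈ P j, (w k + indVec S k)) + ∏ k ∈ P j, w k) + cFun P S j w := by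
    intro w
    rw [hf, hf]
    simp only [Pi.add_apply]
    rw [← Finset.sum_add_distrib, cFun]
    exact (Finset.add_sum_erase Finset.univ _ (Finset.mem_univ j)).symm
  -- cFun of phi depends only on the off-block part
  have hcphi : ∀ p : ZMod 2 × ({k : Fin K // k ∉ P j} → ZMod 2),
      cFun P S j (phi P S j p) = cFun P S j (extZ (P j) p.2) := by
    intro p
    unfold cFun
    refine Finset.sum_congr rfl fun i hi => ?_
    have hij : i ≠ j := Finset.ne_of_mem_erase hi
    have hkval : ∀ k ∈ P i, phi P S j p k = extZ (P j) p.2 k := by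
      intro k hk
      have hknot : k ∉ P j := hnotPj i hij k hk
      simp [phi, extZ, dif_neg hknot]
    rw [Finset.prod_congr rfl fun k hk => by rw [hkval k hk],
        Finset.prod_congr rfl hkval]
  -- membership
  have hmem : ∀ p : ZMod 2 × ({k : Fin K // k ∉ P j} → ZMod 2),
      phi P S j p ∈ (Finset.univ.filter fun w : Fin K → ZMod 2 => f (w + indVec S) ≠ f w) := by
    intro p
    rw [Finset.mem_filter]
    refine ⟨Finset.mem_univ _, ?_⟩
    rw [zmod2_ne_iff, hdec, hcphi]
    set cv := cFun P S j (extZ (P j) p.2) with hcvdef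
    have hφin : ∀ k ∈ P j, phi P S j p k =
        (1 + cv) * (1 + indVec S k) + p.1 * indVec S k := by
      intro k hk
      simp only [phi, dif_pos hk, hcvdef]
    rcases zmod2_cases cv with h0 | h1
    · rcases zmod2_cases p.1 with hb | hb
      · have hprod1 : ∏ k ∈ P j, (phi P S j p k + indVec S k) = 1 := by
          refine Finset.prod_eq_one fun k hk => ?_
          rw [hφin k hk, h0, hb]
          exact (show ∀ x : ZMod 2, (1 + 0) * (1 + x) + 0 * x + x = 1 by decide) _
        have hprod2 : ∏ k ∈ P j, phi P S j p k = 0 := by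
          refine Finset.prod_eq_zero hk₀P ?_
          rw [hφin k₀ hk₀P, h0, hb, hind0]; decide
        rw [hprod1, hprod2, h0]; decide
      · have hprod1 : ∏ k ∈ P j, (phi P S j p k + indVec S k) = 0 := by
          refine Finset.prod_eq_zero hk₀P ?_
          rw [hφin k₀ hk₀P, h0, hb, hind0]; decide
        have hprod2 : ∏ k ∈ P j, phi P S j p k = 1 := by
          refine Finset.prod_eq_one fun k hk => ?_
          rw [hφin k hk, h0, hb]
          exact (show ∀ x : ZMod 2, (1 + 0) * (1 + x) + 1 * x = 1 by decide) _
        rw [hprod1, hprod2, h0]; decide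
    · -- cv = 1 : get a point of P j outside S
      have hk₁ : ∃ k ∈ P j, k ∉ S := by
        by_contra h
        push_neg at h
        have hsub : P j ⊆ S := fun k hk => h k hk
        have hPS : P j = S := Finset.eq_of_subset_of_card_le hsub (by rw [hS, hcard])
        have hzero : cv = 0 := by
          rw [hcvdef, cFun]
          refine Finset.sum_eq_zero fun i hi => ?_
          have hij : i ≠ j := Finset.ne_of_mem_erase hi
          have heq : ∏ k ∈ P i, (extZ (P j) p.2 k + indVec S k) = ∏ k ∈ P i, extZ (P j) p.2 k := by
            refine Finset.prod_congr rfl fun k hk => ?_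
            have hknotS : k ∉ S := by
              rw [← hPS]; exact hnotPj i hij k hk
            rw [indVec, if_neg hknotS, add_zero]
          rw [heq]
          exact (show ∀ x : ZMod 2, x + x = 0 by decide) _
        rw [hzero] at h1
        exact absurd h1 (by decide)
      obtain ⟨k₁, hk₁P, hk₁S⟩ := hk₁
      have hind1 : indVec S k₁ = 0 := by simp [indVec, hk₁S]
      rcases zmod2_cases p.1 with hb | hb
      · have hprod1 : ∏ k ∈ P j, (phi P S j p k + indVec S k) = 0 := by
          refine Finset.prod_eq_zero hk₁P ?_
          rw [hφin k₁ hk₁P, h1, hb, hind1]; decide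
        have hprod2 : ∏ k ∈ P j, phi P S j p k = 0 := by
          refine Finset.prod_eq_zero hk₀P ?_
          rw [hφin k₀ hk₀P, h1, hb, hind0]; decide
        rw [hprod1, hprod2, h1]; decide
      · have hprod1 : ∏ k ∈ P j, (phi P S j p k + indVec S k) = 0 := by
          refine Finset.prod_eq_zero hk₀P ?_
          rw [hφin k₀ hk₀P, h1, hb, hind0]; decide
        have hprod2 : ∏ k ∈ P j, phi P S j p k = 0 := by
          refine Finset.prod_eq_zero hk₁P ?_
          rw [hφin k₁ hk₁P, h1, hb, hind1]; decide
        rw [hprod1, hprod2, h1]; decide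
  -- injectivity
  have hinj : Set.InjOn (phi P S j)
      ↑(Finset.univ : Finset (ZMod 2 × ({k : Fin K // k ∉ P j} → ZMod 2))) := by
    intro p _ q _ hpq
    have hu : p.2 = q.2 := by
      funext k
      have h := congrFun hpq k.1
      simpa [phi, dif_neg k.2] using h
    have hb : p.1 = q.1 := by
      have h := congrFun hpq k₀
      simp only [phi, dif_pos hk₀P, hind0] at h
      have hsimp : ∀ c b : ZMod 2, (1 + c) * (1 + 1) + b * 1 = b := by decide
      rwa [hsimp, hsimp] at h
    exact Prod.ext hb hu
  have hcardle := Finset.card_le_card_of_injOn (phi P S j) (fun p _ => hmem p) hinj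
  rw [Finset.card_univ] at hcardle
  have hcard2 : Fintype.card (ZMod 2 × ({k : Fin K // k ∉ P j} → ZMod 2)) = 2 ^ (K - M + 1) := by
    rw [Fintype.card_prod, Fintype.card_fun, ZMod.card]
    have h1 : Fintype.card {k : Fin K // k ∉ P j} = K - M := by
      rw [Fintype.card_subtype_compl, Fintype.card_fin, Fintype.card_coe, hcard]
    rw [h1, pow_succ, mul_comm]
  rwa [hcard2] at hcardle

theorem stmt8 (N M K : ℕ) (hN : 1 ≤ N) (hM : 1 ≤ M) (hK : K = N * M)
    (P : Fin N → Finset (Fin K))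
    (hdisj : ∀ i j, i ≠ j → Disjoint (P i) (P j))
    (hcard : ∀ j, (P j).card = M)
    (hcover : (Finset.univ : Finset (Fin N)).biUnion P = Finset.univ)
    (f : (Fin K → ZMod 2) → ZMod 2)
    (hf : ∀ w, f w = ∑ j : Fin N, ∏ k ∈ P j, w k)
    (S : Fin N → Finset (Fin K)) (hScard : ∀ n, (S n).card = M) :
    (∑ n : Fin N, jointInf (S n) f) ≥ N / 2 ^ (M - 1) := by
  have hMK : M ≤ K := by
    subst hK
    calc M = 1 * M := (one_mul M).symm
    _ ≤ N * M := Nat.mul_le_mul_right M hN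
  have key1 : ∀ n, (1 : ℚ) / 2 ^ (M - 1) ≤ jointInf (S n) f := by
    intro n
    have h := key hM hMK P hdisj hcard hcover f hf (S n) (hScard n)
    rw [jointInf, div_le_div_iff₀ (by positivity) (by positivity)]
    have hq : ((2 : ℚ) ^ (K - M + 1)) ≤
        ((Finset.univ.filter fun w : Fin K → ZMod 2 => f (w + indVec (S n)) ≠ f w).card : ℚ) := by
      exact_mod_cast h
    calc (1 : ℚ) * 2 ^ K = 2 ^ (K - M + 1) * 2 ^ (M - 1) := by
          rw [one_mul, ← pow_add]; congr 1; omega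
    _ ≤ _ * 2 ^ (M - 1) := by
          exact mul_le_mul_of_nonneg_right hq (by positivity)
  calc (N : ℚ) / 2 ^ (M - 1) = ∑ _n : Fin N, (1 : ℚ) / 2 ^ (M - 1) := by
        rw [Finset.sum_const, Finset.card_univ, Fintype.card_fin, nsmul_eq_mul]; ring
  _ ≤ ∑ n, jointInf (S n) f := Finset.sum_le_sum (fun n _ => key1 n)
end

section
/- Let N ≥ 1, M ≥ 1, K = N·M, and let P_1, …, P_N be pairwise disjoint subsets of Fin K with |P_j| = M for all j whose union is all of Fin K. Define f(w) = Σ_{j=1}^N ∏_{k ∈ P_j} w_k (operations in ZMod 2). Then the minimum, over all placement configurations S = (S_1, …, S_N) with each S_n ⊆ Fin K of cardinality |S_n| = M, of the average joint sensitivity as_S(f) = Σ_{n=1}^N Inf_{S_n}(f) equals N/2^{M−1}, and this minimum is attained by the placement S* = (P_1, …, P_N). -/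
open Finset

/- ### Auxiliary machinery -/

def extBlk {K : ℕ} (Q : Finset (Fin K)) (v : {x // x ∈ Q} → ZMod 2) : Fin K → ZMod 2 :=
  fun k => if h : k ∈ Q then v ⟨k, h⟩ else 0

def chi : ZMod 2 → ℤ := fun x => if x = 1 then -1 else 1

lemma chi_add (a b : ZMod 2) : chi (a + b) = chi a * chi b := by
  fin_cases a <;> fin_cases b <;> decide

lemma chi_sum {ι : Type*} (s : Finset ι) (d : ι → ZMod 2) :
    chi (∑ i ∈ s, d i) = ∏ i ∈ s, chi (d i) := by
  induction s using Finset.cons_induction with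
  | empty => simp [chi]
  | cons a s ha ih => rw [Finset.sum_cons, Finset.prod_cons, chi_add, ih]

lemma sum_chi {α : Type*} [Fintype α] [DecidableEq α] (g : α → ZMod 2) :
    ∑ a : α, chi (g a) = (Fintype.card α : ℤ) - 2 * (Finset.univ.filter fun a => g a = 1).card := by
  have h : ∀ a, chi (g a) = 1 - 2 * (if g a = 1 then 1 else 0 : ℤ) := by
    intro a; by_cases h : g a = 1 <;> simp [chi, h]
  rw [Finset.sum_congr rfl (fun a _ => h a), Finset.sum_sub_distrib, ← Finset.mul_sum,
    Finset.sum_boole]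
  rw [Fintype.card]; simp only [Finset.sum_const, nsmul_eq_mul, mul_one]

lemma zmod2_prod_eq_one {ι : Type*} (s : Finset ι) (g : ι → ZMod 2) :
    (∏ i ∈ s, g i) = 1 ↔ ∀ i ∈ s, g i = 1 := by
  have h2 : ∀ a b : ZMod 2, a * b = 1 ↔ a = 1 ∧ b = 1 := by decide
  induction s using Finset.cons_induction with
  | empty => simp
  | cons a s ha ih => simp only [Finset.prod_cons, Finset.forall_mem_cons, h2, ih]

lemma extBlk_prod {K : ℕ} (Q : Finset (Fin K)) (v : {x // x ∈ Q} → ZMod 2)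
    (F : Fin K → ZMod 2 → ZMod 2) :
    (∏ k ∈ Q, F k (extBlk Q v k)) = ∏ k ∈ Q.attach, F k.1 (v k) := by
  rw [← Finset.prod_attach Q (fun k => F k (extBlk Q v k))]
  refine Finset.prod_congr rfl ?_
  intro x _
  congr 1
  unfold extBlk
  rw [dif_pos x.2]

lemma sum_prod_blocks {K N : ℕ} (P : Fin N → Finset (Fin K))
    (hdisj : ∀ i j, i ≠ j → Disjoint (P i) (P j))
    (hcover : (Finset.univ : Finset (Fin N)).biUnion P = Finset.univ)
    (D : Fin N → (Fin K → ZMod 2) → ℤ)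
    (hloc : ∀ j w w', (∀ k ∈ P j, w k = w' k) → D j w = D j w') :
    ∑ w : Fin K → ZMod 2, ∏ j, D j w
      = ∏ j, ∑ v : ({x // x ∈ P j} → ZMod 2), D j (extBlk (P j) v) := by
  have hmem : ∀ k : Fin K, ∃ j, k ∈ P j := by
    intro k
    have : k ∈ (Finset.univ : Finset (Fin N)).biUnion P := by rw [hcover]; exact mem_univ k
    obtain ⟨j, _, hj⟩ := Finset.mem_biUnion.mp this
    exact ⟨j, hj⟩
  choose blk hblk using hmem
  have huniq : ∀ (k : Fin K) (j : Fin N), k ∈ P j → blk k = j := by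
    intro k j h
    by_contra hne
    exact (Finset.disjoint_left.mp (hdisj _ _ hne) (hblk k)) h
  let e : (Fin K → ZMod 2) ≃ (∀ j : Fin N, {x // x ∈ P j} → ZMod 2) :=
    { toFun := fun w j k => w k.1
      invFun := fun u k => u (blk k) ⟨k, hblk k⟩
      left_inv := fun w => rfl
      right_inv := by
        intro u
        funext j k
        obtain ⟨k, hk⟩ := k
        have hj := huniq k j hk
        subst hj
        rfl }
  rw [← Equiv.sum_comp e.symm (fun w => ∏ j, D j w)]
  have key : ∀ (u : ∀ j : Fin N, {x // x ∈ P j} → ZMod 2) (j : Fin N),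
      D j (e.symm u) = D j (extBlk (P j) (u j)) := by
    intro u j
    apply hloc
    intro k hk
    show u (blk k) ⟨k, hblk k⟩ = extBlk (P j) (u j) k
    unfold extBlk
    rw [dif_pos hk]
    have hj := huniq k j hk
    subst hj
    rfl
  calc ∑ u : (∀ j : Fin N, {x // x ∈ P j} → ZMod 2), ∏ j, D j (e.symm u)
      = ∑ u : (∀ j : Fin N, {x // x ∈ P j} → ZMod 2), ∏ j, D j (extBlk (P j) (u j)) := by
        exact Finset.sum_congr rfl (fun u _ => Finset.prod_congr rfl (fun j _ => key u j))
    _ = ∏ j, ∑ v : ({x // x ∈ P j} → ZMod 2), D j (extBlk (P j) v) := by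
        rw [Finset.prod_univ_sum]
        rw [Fintype.piFinset_univ]

lemma block_sum {K M : ℕ} (S Q : Finset (Fin K)) (hQ : Q.card = M) :
    ∑ v : ({x // x ∈ Q} → ZMod 2),
      chi ((∏ k ∈ Q, (extBlk Q v k + indVec S k)) + ∏ k ∈ Q, extBlk Q v k)
      = if (S ∩ Q).Nonempty then 2 ^ M - 4 else 2 ^ M := by
  classical
  have hcardfun : (Fintype.card ({x // x ∈ Q} → ZMod 2) : ℤ) = 2 ^ M := by
    rw [Fintype.card_fun, Fintype.card_coe, hQ]; norm_num
  rw [sum_chi, hcardfun]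
  have hp1 : ∀ v : {x // x ∈ Q} → ZMod 2,
      (∏ k ∈ Q, (extBlk Q v k + indVec S k)) = ∏ k ∈ Q.attach, (v k + indVec S k.1) :=
    fun v => extBlk_prod Q v (fun k x => x + indVec S k)
  have hp2 : ∀ v : {x // x ∈ Q} → ZMod 2,
      (∏ k ∈ Q, extBlk Q v k) = ∏ k ∈ Q.attach, v k :=
    fun v => extBlk_prod Q v (fun _ x => x)
  set p1 : ({x // x ∈ Q} → ZMod 2) → ZMod 2 := fun v => ∏ k ∈ Q.attach, (v k + indVec S k.1)
  set p2 : ({x // x ∈ Q} → ZMod 2) → ZMod 2 := fun v => ∏ k ∈ Q.attach, v k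
  have hfilter : (Finset.univ.filter fun v : {x // x ∈ Q} → ZMod 2 =>
      ((∏ k ∈ Q, (extBlk Q v k + indVec S k)) + ∏ k ∈ Q, extBlk Q v k) = 1)
      = Finset.univ.filter fun v => p1 v + p2 v = 1 := by
    refine Finset.filter_congr ?_
    intro v _
    rw [hp1, hp2]
  rw [hfilter]
  set v1 : {x // x ∈ Q} → ZMod 2 := fun k => 1 + indVec S k.1 with hv1
  set v2 : {x // x ∈ Q} → ZMod 2 := fun _ => 1 with hv2
  have hadd1 : ∀ a b : ZMod 2, a + b = 1 ↔ a = 1 + b := by decide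
  have hne01 : ∀ a b : ZMod 2, a + b = 1 ↔ a ≠ b := by decide
  have h01 : ∀ a : ZMod 2, a = 0 ∨ a = 1 := by decide
  have hp1iff : ∀ v, p1 v = 1 ↔ v = v1 := by
    intro v
    rw [show p1 v = ∏ k ∈ Q.attach, (v k + indVec S k.1) from rfl, zmod2_prod_eq_one]
    constructor
    · intro h; funext k
      have := h k (Finset.mem_attach _ _)
      rw [hadd1] at this; exact this
    · intro h k _; rw [h, hv1]; simp only []
      rw [hadd1]
  have hp2iff : ∀ v, p2 v = 1 ↔ v = v2 := by
    intro v
    rw [show p2 v = ∏ k ∈ Q.attach, v k from rfl, zmod2_prod_eq_one]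
    constructor
    · intro h; funext k; exact h k (Finset.mem_attach _ _)
    · intro h k _; rw [h]
  by_cases hemp : (S ∩ Q).Nonempty
  · rw [if_pos hemp]
    obtain ⟨a, ha⟩ := hemp
    have haS : a ∈ S := (Finset.mem_inter.mp ha).1
    have haQ : a ∈ Q := (Finset.mem_inter.mp ha).2
    have hv12 : v1 ≠ v2 := by
      intro h
      have := congrFun h ⟨a, haQ⟩
      rw [hv1, hv2] at this
      simp only [indVec, if_pos haS] at this
      exact absurd this (by decide)
    have hset : (Finset.univ.filter fun v => p1 v + p2 v = 1) = {v1, v2} := by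
      ext v
      simp only [Finset.mem_filter, Finset.mem_univ, true_and, Finset.mem_insert,
        Finset.mem_singleton]
      rw [hne01]
      constructor
      · intro h
        rcases h01 (p1 v) with h1 | h1 <;> rcases h01 (p2 v) with h2 | h2
        · exact absurd (h1.trans h2.symm) h
        · right; exact (hp2iff v).mp h2
        · left; exact (hp1iff v).mp h1
        · exact absurd (h1.trans h2.symm) h
      · rintro (rfl | rfl)
        · have h1 : p1 v1 = 1 := (hp1iff v1).mpr rfl
          have h2 : p2 v1 ≠ 1 := fun h => hv12 ((hp2iff v1).mp h)
          rw [h1]; exact fun h => h2 h.symm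
        · have h2 : p2 v2 = 1 := (hp2iff v2).mpr rfl
          have h1 : p1 v2 ≠ 1 := fun h => hv12 ((hp1iff v2).mp h).symm
          rw [h2]; exact h1
    rw [hset]
    rw [Finset.card_insert_of_notMem (by simpa using hv12), Finset.card_singleton]
    push_cast; ring
  · rw [if_neg hemp]
    have hSQ : ∀ k ∈ Q, k ∉ S := by
      intro k hk hks
      exact hemp ⟨k, Finset.mem_inter.mpr ⟨hks, hk⟩⟩
    have hzero : ∀ v, p1 v + p2 v = 0 := by
      intro v
      have : p1 v = p2 v := by
        refine Finset.prod_congr rfl ?_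
        intro k _
        simp [indVec, hSQ k.1 k.2]
      rw [this]
      exact CharTwo.add_self_eq_zero _
    have hset : (Finset.univ.filter fun v => p1 v + p2 v = 1) = ∅ := by
      ext v
      simp only [Finset.mem_filter, Finset.mem_univ, true_and, Finset.notMem_empty, iff_false]
      rw [hzero v]
      decide
    rw [hset]
    simp

/-- The exact value of the joint influence, in terms of the number of hit blocks. -/
lemma jointInf_formula (N M K : ℕ) (hK : K = N * M)
    (P : Fin N → Finset (Fin K))
    (hdisj : ∀ i j, i ≠ j → Disjoint (P i) (P j))
    (hcard : ∀ j, (P j).card = M)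
    (hcover : (Finset.univ : Finset (Fin N)).biUnion P = Finset.univ)
    (f : (Fin K → ZMod 2) → ZMod 2)
    (hf : ∀ w, f w = ∑ j : Fin N, ∏ k ∈ P j, w k)
    (S : Finset (Fin K)) :
    jointInf S f =
      (((2 ^ K - (2 ^ M - 4) ^ ((Finset.univ.filter fun j => (S ∩ P j).Nonempty).card)
        * (2 ^ M) ^ (N - (Finset.univ.filter fun j => (S ∩ P j).Nonempty).card) : ℤ)) : ℚ)
        / 2 ^ (K + 1) := by
  classical
  set m := (Finset.univ.filter fun j => (S ∩ P j).Nonempty).card with hm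
  set D : Fin N → (Fin K → ZMod 2) → ZMod 2 :=
    fun j w => (∏ k ∈ P j, (w k + indVec S k)) + ∏ k ∈ P j, w k with hD
  have hgw : ∀ w : Fin K → ZMod 2, f (w + indVec S) + f w = ∑ j, D j w := by
    intro w
    rw [hf, hf, ← Finset.sum_add_distrib]
    refine Finset.sum_congr rfl ?_
    intro j _
    rw [hD]
    congr 1
  have hne : ∀ a b : ZMod 2, (a ≠ b) ↔ a + b = 1 := by decide
  have hfiltereq : (Finset.univ.filter fun w : Fin K → ZMod 2 => f (w + indVec S) ≠ f w)
      = Finset.univ.filter fun w => (∑ j, D j w) = 1 := by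
    refine Finset.filter_congr ?_
    intro w _
    rw [hne, hgw w]
  -- character sum computation
  have hcardK : (Fintype.card (Fin K → ZMod 2) : ℤ) = 2 ^ K := by
    rw [Fintype.card_fun]; simp
  have hchar : ∑ w : Fin K → ZMod 2, chi (∑ j, D j w)
      = (2 ^ K : ℤ) - 2 * (Finset.univ.filter fun w => (∑ j, D j w) = 1).card := by
    rw [sum_chi, hcardK]
  have hloc : ∀ j (w w' : Fin K → ZMod 2), (∀ k ∈ P j, w k = w' k) →
      chi (D j w) = chi (D j w') := by
    intro j w w' h
    congr 1
    rw [hD]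
    simp only []
    congr 1
    · exact Finset.prod_congr rfl fun k hk => by rw [h k hk]
    · exact Finset.prod_congr rfl fun k hk => by rw [h k hk]
  have hfact : ∑ w : Fin K → ZMod 2, chi (∑ j, D j w)
      = ∏ j, (if (S ∩ P j).Nonempty then (2:ℤ) ^ M - 4 else 2 ^ M) := by
    have h1 : ∀ w : Fin K → ZMod 2, chi (∑ j, D j w) = ∏ j, chi (D j w) :=
      fun w => chi_sum Finset.univ (fun j => D j w)
    rw [Finset.sum_congr rfl (fun w _ => h1 w)]
    rw [sum_prod_blocks P hdisj hcover (fun j w => chi (D j w)) hloc]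
    refine Finset.prod_congr rfl ?_
    intro j _
    exact block_sum S (P j) (hcard j)
  have hprod : ∏ j, (if (S ∩ P j).Nonempty then (2:ℤ) ^ M - 4 else 2 ^ M)
      = (2 ^ M - 4) ^ m * (2 ^ M) ^ (N - m) := by
    rw [Finset.prod_ite, Finset.prod_const, Finset.prod_const, ← hm]
    congr 2
    have := Finset.card_filter_add_card_filter_not
      (s := (Finset.univ : Finset (Fin N))) (p := fun j => (S ∩ P j).Nonempty)
    simp only [Finset.card_univ, Fintype.card_fin] at this
    omega
  -- combine
  have hcount : 2 * ((Finset.univ.filter fun w : Fin K → ZMod 2 =>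
      f (w + indVec S) ≠ f w).card : ℤ) = 2 ^ K - (2 ^ M - 4) ^ m * (2 ^ M) ^ (N - m) := by
    rw [hfiltereq]
    have := hchar
    rw [hfact, hprod] at this
    linarith
  rw [jointInf]
  have h2 : ((Finset.univ.filter fun w : Fin K → ZMod 2 =>
      f (w + indVec S) ≠ f w).card : ℚ)
      = ((2 ^ K - (2 ^ M - 4) ^ m * (2 ^ M) ^ (N - m) : ℤ) : ℚ) / 2 := by
    have := hcount
    have h3 : (2 : ℚ) * ((Finset.univ.filter fun w : Fin K → ZMod 2 =>
        f (w + indVec S) ≠ f w).card : ℚ)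
        = ((2 ^ K - (2 ^ M - 4) ^ m * (2 ^ M) ^ (N - m) : ℤ) : ℚ) := by
      exact_mod_cast congrArg (fun x : ℤ => (x : ℚ)) this
    linarith
  rw [h2, div_div]
  congr 1
  rw [pow_succ]
  ring


lemma value_one (N M K : ℕ) (hM : 1 ≤ M) (hN : 1 ≤ N) (hK : K = N * M) :
    (((2 ^ K - (2 ^ M - 4) ^ 1 * (2 ^ M) ^ (N - 1) : ℤ)) : ℚ) / 2 ^ (K + 1)
      = 1 / 2 ^ (M - 1) := by
  obtain ⟨a, rfl⟩ : ∃ a, M = a + 1 := ⟨M - 1, by omega⟩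
  obtain ⟨b, rfl⟩ : ∃ b, N = b + 1 := ⟨N - 1, by omega⟩
  subst hK
  push_cast
  rw [pow_one]
  rw [div_eq_div_iff (by positivity) (by positivity)]
  rw [← pow_mul]
  rw [show (b + 1) * (a + 1) = a * b + a + b + 1 from by ring,
    show (a + 1) * b = a * b + b from by ring,
    show a * b + a + b + 1 + 1 = a * b + a + b + 2 from by ring]
  simp only [pow_add]
  ring

lemma prod_le (M N m : ℕ) (hM : 1 ≤ M) (h1 : 1 ≤ m) (hmM : m ≤ M) (hmN : m ≤ N) :
    ((2:ℤ) ^ M - 4) ^ m * ((2:ℤ) ^ M) ^ (N - m) ≤ ((2:ℤ) ^ M - 4) ^ 1 * ((2:ℤ) ^ M) ^ (N - 1) := by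
  obtain ⟨t, rfl⟩ : ∃ t, m = t + 1 := ⟨m - 1, by omega⟩
  have hsplit : ((2:ℤ) ^ M) ^ (N - 1) = ((2:ℤ) ^ M) ^ t * ((2:ℤ) ^ M) ^ (N - (t + 1)) := by
    rw [← pow_add]; congr 1; omega
  rw [pow_one, hsplit, ← mul_assoc]
  apply mul_le_mul_of_nonneg_right _ (by positivity)
  rcases Nat.eq_zero_or_pos t with rfl | ht
  · simp
  · have hM2 : 2 ≤ M := by omega
    have h4 : (0:ℤ) ≤ 2 ^ M - 4 := by
      have : (2:ℤ) ^ 2 ≤ 2 ^ M := pow_le_pow_right₀ (by norm_num) hM2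
      norm_num at this; linarith
    calc ((2:ℤ) ^ M - 4) ^ (t + 1) = (2 ^ M - 4) * (2 ^ M - 4) ^ t := by rw [pow_succ']
      _ ≤ (2 ^ M - 4) * (2 ^ M) ^ t := by
          exact mul_le_mul_of_nonneg_left (pow_le_pow_left₀ h4 (by linarith) t) h4


theorem stmt9 (N M K : ℕ) (hN : 1 ≤ N) (hM : 1 ≤ M) (hK : K = N * M)
    (P : Fin N → Finset (Fin K))
    (hdisj : ∀ i j, i ≠ j → Disjoint (P i) (P j))
    (hcard : ∀ j, (P j).card = M)
    (hcover : (Finset.univ : Finset (Fin N)).biUnion P = Finset.univ)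
    (f : (Fin K → ZMod 2) → ZMod 2)
    (hf : ∀ w, f w = ∑ j : Fin N, ∏ k ∈ P j, w k) :
    IsLeast
      {x : ℚ | ∃ S : Fin N → Finset (Fin K),
        (∀ n, (S n).card = M) ∧ x = ∑ n : Fin N, jointInf (S n) f}
      ((N : ℚ) / 2 ^ (M - 1)) ∧
    (∑ n : Fin N, jointInf (P n) f) = N / 2 ^ (M - 1) := by
  classical
  have hKpos : 0 < K := by
    rw [hK]; exact Nat.mul_pos hN hM
  have hformula := jointInf_formula N M K hK P hdisj hcard hcover f hf
  -- lower bound for any admissible block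
  have hlow : ∀ S : Finset (Fin K), S.card = M → 1 / 2 ^ (M - 1) ≤ jointInf S f := by
    intro S hScard
    set c := (Finset.univ.filter fun j => (S ∩ P j).Nonempty).card with hc
    have hc1 : 1 ≤ c := by
      obtain ⟨a, ha⟩ : S.Nonempty := Finset.card_pos.mp (by omega)
      have haU : a ∈ (Finset.univ : Finset (Fin N)).biUnion P := by
        rw [hcover]; exact Finset.mem_univ a
      obtain ⟨j, _, hj⟩ := Finset.mem_biUnion.mp haU
      exact Finset.card_pos.mpr
        ⟨j, Finset.mem_filter.mpr ⟨Finset.mem_univ j, ⟨a, Finset.mem_inter.mpr ⟨ha, hj⟩⟩⟩⟩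
    have hcN : c ≤ N := le_trans (Finset.card_filter_le _ _) (by simp)
    have hcM : c ≤ M := by
      rw [← hScard]
      apply Finset.card_le_card_of_injOn
        (fun j => if h : (S ∩ P j).Nonempty then h.choose else ⟨0, hKpos⟩)
      · intro j hj
        have h : (S ∩ P j).Nonempty := (Finset.mem_filter.mp hj).2
        simp only [dif_pos h]
        exact Finset.mem_of_mem_inter_left h.choose_spec
      · intro j hj j' hj' heq
        have h : (S ∩ P j).Nonempty := (Finset.mem_filter.mp (Finset.mem_coe.mp hj)).2
        have h' : (S ∩ P j').Nonempty := (Finset.mem_filter.mp (Finset.mem_coe.mp hj')).2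
        simp only [dif_pos h, dif_pos h'] at heq
        by_contra hne
        have e1 : h.choose ∈ P j := Finset.mem_of_mem_inter_right h.choose_spec
        have e2 : h'.choose ∈ P j' := Finset.mem_of_mem_inter_right h'.choose_spec
        rw [heq] at e1
        exact Finset.disjoint_left.mp (hdisj j j' hne) e1 e2
    rw [hformula S, ← hc, ← value_one N M K hM hN hK]
    rw [div_le_div_iff_of_pos_right (by positivity)]
    exact_mod_cast sub_le_sub_left (prod_le M N c hM hc1 hcM hcN) _
  -- exact value for the defining partition
  have hPval : ∀ n, jointInf (P n) f = 1 / 2 ^ (M - 1) := by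
    intro n
    have hc : (Finset.univ.filter fun j => (P n ∩ P j).Nonempty).card = 1 := by
      have hset : (Finset.univ.filter fun j => (P n ∩ P j).Nonempty) = {n} := by
        ext j
        simp only [Finset.mem_filter, Finset.mem_univ, true_and, Finset.mem_singleton]
        constructor
        · intro h
          by_contra hne
          rw [Finset.disjoint_iff_inter_eq_empty.mp (hdisj n j (fun he => hne he.symm))] at h
          exact Finset.not_nonempty_empty h
        · rintro rfl
          rw [Finset.inter_self]
          exact Finset.card_pos.mp (by rw [hcard]; omega)
      rw [hset, Finset.card_singleton]
    rw [hformula (P n), hc]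
    exact value_one N M K hM hN hK
  have hsum : (∑ n : Fin N, jointInf (P n) f) = N / 2 ^ (M - 1) := by
    rw [Finset.sum_congr rfl (fun n _ => hPval n), Finset.sum_const, Finset.card_univ,
      Fintype.card_fin, nsmul_eq_mul, mul_one_div]
  refine ⟨⟨⟨P, hcard, hsum.symm⟩, ?_⟩, hsum⟩
  rintro x ⟨S, hSc, rfl⟩
  calc (N : ℚ) / 2 ^ (M - 1) = ∑ _n : Fin N, 1 / 2 ^ (M - 1) := by
        rw [Finset.sum_const, Finset.card_univ, Fintype.card_fin, nsmul_eq_mul, mul_one_div]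
    _ ≤ ∑ n : Fin N, jointInf (S n) f :=
        Finset.sum_le_sum fun n _ => hlow (S n) (hSc n)
end

section
/- Let d ≥ 2 and let T, Q ⊆ Fin K be disjoint subsets with |T| = |Q| = d − 1. Define g : (Fin K → ZMod 2) → ZMod 2 by g(w) = Σ_{A ⊊ T} ∏_{k ∈ A} w_k + ∏_{k ∈ Q} w_k (operations in ZMod 2, A ranging over proper subsets of T). Then (card {w : Fin K → ZMod 2 | g(w) = 1}) / 2^K = (1 − 2^{2−d}) · 2^{1−d} + 2^{2−d} · (1 − 2^{1−d}). -/
open Finset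

private lemma card_agree {K : ℕ} (S : Finset (Fin K)) (v : Fin K → ZMod 2) :
    (Finset.univ.filter fun w : Fin K → ZMod 2 => ∀ k ∈ S, w k = v k).card
      = 2 ^ (K - S.card) := by
  classical
  have h : Finset.univ.filter (fun w : Fin K → ZMod 2 => ∀ k ∈ S, w k = v k)
      = Fintype.piFinset (fun i => if i ∈ S then {v i} else Finset.univ) := by
    ext w
    simp only [mem_filter, mem_univ, true_and, Fintype.mem_piFinset]
    constructor
    · intro h i
      by_cases hi : i ∈ S
      · simp [hi, h i hi]
      · simp [hi]
    · intro h k hk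
      have := h k
      simpa [hk] using this
  rw [h, Fintype.card_piFinset]
  have : ∀ i : Fin K, (if i ∈ S then ({v i} : Finset (ZMod 2)) else Finset.univ).card
      = if i ∈ S then 1 else 2 := by
    intro i; split <;> simp
  rw [Finset.prod_congr rfl fun i _ => this i]
  rw [Finset.prod_ite, Finset.prod_const_one, Finset.prod_const, one_mul]
  have hcompl : (Finset.univ.filter fun i : Fin K => ¬ i ∈ S) = Sᶜ := by
    ext i; simp
  rw [hcompl, Finset.card_compl, Fintype.card_fin]

private lemma prod_ones {K : ℕ} (S : Finset (Fin K)) (w : Fin K → ZMod 2) :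
    (∏ k ∈ S, w k) = if ∀ k ∈ S, w k = 1 then 1 else 0 := by
  split_ifs with h
  · exact Finset.prod_eq_one h
  · push_neg at h
    obtain ⟨k, hk, hk1⟩ := h
    refine Finset.prod_eq_zero hk ?_
    have : ∀ x : ZMod 2, x ≠ 1 → x = 0 := by decide
    exact this _ hk1

private lemma prod_zeros {K : ℕ} (S : Finset (Fin K)) (w : Fin K → ZMod 2) :
    (∏ k ∈ S, (w k + 1)) = if ∀ k ∈ S, w k = 0 then 1 else 0 := by
  split_ifs with h
  · exact Finset.prod_eq_one fun k hk => by rw [h k hk]; rfl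
  · push_neg at h
    obtain ⟨k, hk, hk0⟩ := h
    refine Finset.prod_eq_zero hk ?_
    have : ∀ x : ZMod 2, x ≠ 0 → x + 1 = 0 := by decide
    exact this _ hk0

private lemma count_split {K : ℕ} (p q : (Fin K → ZMod 2) → Prop)
    [DecidablePred p] [DecidablePred q] :
    (Finset.univ.filter fun w => p w ∧ q w).card
      + (Finset.univ.filter fun w => p w ∧ ¬ q w).card
      = (Finset.univ.filter p).card := by
  classical
  rw [← Finset.filter_filter, ← Finset.filter_filter,
    Finset.card_filter_add_card_filter_not]

theorem stmt12 (K d : ℕ) (hd : 2 ≤ d)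
    (T Q : Finset (Fin K)) (hTQ : Disjoint T Q)
    (hT : T.card = d - 1) (hQ : Q.card = d - 1)
    (g : (Fin K → ZMod 2) → ZMod 2)
    (hg : ∀ w, g w = (∑ A ∈ T.powerset.filter (· ≠ T), ∏ k ∈ A, w k)
      + ∏ k ∈ Q, w k) :
    ((Finset.univ.filter fun w : Fin K → ZMod 2 => g w = 1).card : ℚ) / 2 ^ K
      = (1 - (2 : ℚ) ^ ((2 : ℤ) - (d : ℤ))) * (2 : ℚ) ^ ((1 : ℤ) - (d : ℤ))
        + (2 : ℚ) ^ ((2 : ℤ) - (d : ℤ)) * (1 - (2 : ℚ) ^ ((1 : ℤ) - (d : ℤ))) := by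
  classical
  obtain ⟨t, rfl⟩ : ∃ t, d = t + 1 := ⟨d - 1, by omega⟩
  simp only [Nat.add_sub_cancel] at hT hQ
  have ht1 : 1 ≤ t := by omega
  have hTQcard : (T ∪ Q).card = 2 * t := by
    rw [Finset.card_union_of_disjoint hTQ, hT, hQ]; ring
  have hK2 : 2 * t ≤ K := by
    have h := Finset.card_le_univ (T ∪ Q)
    rw [hTQcard] at h
    simpa using h
  obtain ⟨m, hm⟩ : ∃ m, K = m + 2 * t := ⟨K - 2 * t, by omega⟩
  have hKt : K - t = m + t := by omega
  have hK2t : K - 2 * t = m := by omega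
  have h1e : ((1 : ℤ) - ((t + 1 : ℕ) : ℤ)) = -(t : ℤ) := by push_cast; ring
  have h2e : ((2 : ℤ) - ((t + 1 : ℕ) : ℤ)) = -(t : ℤ) + 1 := by push_cast; ring
  have hab : ∀ w : Fin K → ZMod 2, (∀ k ∈ T, w k = 1) → (∀ k ∈ T, w k = 0) → False := by
    intro w h1 h0
    obtain ⟨k, hk⟩ := Finset.card_pos.mp (by omega : 0 < T.card)
    have h' := h1 k hk
    rw [h0 k hk] at h'
    exact absurd h' (by decide)
  have hgw : ∀ w : Fin K → ZMod 2, g w =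
      (if ∀ k ∈ T, w k = 0 then 1 else 0) + (if ∀ k ∈ T, w k = 1 then 1 else 0)
        + (if ∀ k ∈ Q, w k = 1 then 1 else 0) := by
    intro w
    have hp : ∏ k ∈ T, (w k + 1) = ∑ A ∈ T.powerset, ∏ k ∈ A, w k := by
      rw [Finset.prod_add]; simp
    have he : (∑ A ∈ T.powerset.erase T, ∏ k ∈ A, w k) + ∏ k ∈ T, w k
        = ∑ A ∈ T.powerset, ∏ k ∈ A, w k :=
      Finset.sum_erase_add _ _ (Finset.mem_powerset_self T)
    have h2 : (2 : ZMod 2) = 0 := rfl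
    rw [hg w, Finset.filter_ne', ← prod_zeros T w, ← prod_ones T w, ← prod_ones Q w]
    linear_combination he - hp - (∏ k ∈ T, w k) * h2
  have key : ∀ w : Fin K → ZMod 2, g w = 1 ↔
      (((∀ k ∈ T, w k = 1) ∧ ¬ ∀ k ∈ Q, w k = 1)
        ∨ (((∀ k ∈ T, w k = 0) ∧ ¬ ∀ k ∈ Q, w k = 1)
        ∨ (((∀ k ∈ Q, w k = 1) ∧ ¬ ∀ k ∈ T, w k = 1) ∧ ¬ ∀ k ∈ T, w k = 0))) := by
    intro w
    rw [hgw w]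
    split_ifs <;>
      first
        | exact (hab w ‹∀ k ∈ T, w k = 1› ‹∀ k ∈ T, w k = 0›).elim
        | exact iff_of_true (by decide) (by tauto)
        | exact iff_of_false (by decide) (by tauto)
  -- abbreviations for the three base predicates
  have haA : (Finset.univ.filter fun w : Fin K → ZMod 2 => ∀ k ∈ T, w k = 1).card
      = 2 ^ (K - t) := by
    have h := card_agree T (fun _ => (1 : ZMod 2))
    rw [hT] at h; exact h
  have hbA : (Finset.univ.filter fun w : Fin K → ZMod 2 => ∀ k ∈ T, w k = 0).card
      = 2 ^ (K - t) := by
    have h := card_agree T (fun _ => (0 : ZMod 2))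
    rw [hT] at h; exact h
  have hcA : (Finset.univ.filter fun w : Fin K → ZMod 2 => ∀ k ∈ Q, w k = 1).card
      = 2 ^ (K - t) := by
    have h := card_agree Q (fun _ => (1 : ZMod 2))
    rw [hQ] at h; exact h
  have hac : (Finset.univ.filter fun w : Fin K → ZMod 2 =>
      (∀ k ∈ T, w k = 1) ∧ (∀ k ∈ Q, w k = 1)).card = 2 ^ (K - 2 * t) := by
    have heq : (Finset.univ.filter fun w : Fin K → ZMod 2 =>
        (∀ k ∈ T, w k = 1) ∧ (∀ k ∈ Q, w k = 1))
        = Finset.univ.filter fun w : Fin K → ZMod 2 =>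
            ∀ k ∈ T ∪ Q, w k = (fun _ => (1 : ZMod 2)) k :=
      Finset.filter_congr fun w _ => (Finset.forall_mem_union).symm
    rw [heq, card_agree, hTQcard]
  have hca : (Finset.univ.filter fun w : Fin K → ZMod 2 =>
      (∀ k ∈ Q, w k = 1) ∧ (∀ k ∈ T, w k = 1)).card = 2 ^ (K - 2 * t) := by
    rw [← hac]
    exact congrArg _ (Finset.filter_congr fun w _ => and_comm)
  have hbc : (Finset.univ.filter fun w : Fin K → ZMod 2 =>
      (∀ k ∈ T, w k = 0) ∧ (∀ k ∈ Q, w k = 1)).card = 2 ^ (K - 2 * t) := by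
    have heq : (Finset.univ.filter fun w : Fin K → ZMod 2 =>
        (∀ k ∈ T, w k = 0) ∧ (∀ k ∈ Q, w k = 1))
        = Finset.univ.filter fun w : Fin K → ZMod 2 =>
            ∀ k ∈ T ∪ Q, w k = (fun k => if k ∈ T then (0 : ZMod 2) else 1) k := by
      refine Finset.filter_congr fun w _ => ?_
      rw [Finset.forall_mem_union]
      constructor
      · rintro ⟨h0, h1⟩
        refine ⟨fun k hk => by simp [hk, h0 k hk], fun k hk => ?_⟩
        have hkT : k ∉ T := Finset.disjoint_right.mp hTQ hk
        simp [hkT, h1 k hk]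
      · rintro ⟨h0, h1⟩
        refine ⟨fun k hk => ?_, fun k hk => ?_⟩
        · have := h0 k hk; simpa [hk] using this
        · have := h1 k hk
          have hkT : k ∉ T := Finset.disjoint_right.mp hTQ hk
          simpa [hkT] using this
    rw [heq, card_agree, hTQcard]
  -- split counts
  have e1 := count_split (fun w : Fin K → ZMod 2 => ∀ k ∈ T, w k = 1)
    (fun w => ∀ k ∈ Q, w k = 1)
  rw [hac, haA] at e1
  have e2 := count_split (fun w : Fin K → ZMod 2 => ∀ k ∈ T, w k = 0)
    (fun w => ∀ k ∈ Q, w k = 1)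
  rw [hbc, hbA] at e2
  have e3 := count_split (fun w : Fin K → ZMod 2 => ∀ k ∈ Q, w k = 1)
    (fun w => ∀ k ∈ T, w k = 1)
  rw [hca, hcA] at e3
  have e4 := count_split (fun w : Fin K → ZMod 2 =>
    (∀ k ∈ Q, w k = 1) ∧ ¬ ∀ k ∈ T, w k = 1) (fun w => ∀ k ∈ T, w k = 0)
  have e5 : (Finset.univ.filter fun w : Fin K → ZMod 2 =>
      ((∀ k ∈ Q, w k = 1) ∧ ¬ ∀ k ∈ T, w k = 1) ∧ (∀ k ∈ T, w k = 0)).card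
      = 2 ^ (K - 2 * t) := by
    rw [← hbc]
    refine congrArg _ (Finset.filter_congr fun w _ => ?_)
    constructor
    · rintro ⟨⟨hc1, _⟩, hb1⟩; exact ⟨hb1, hc1⟩
    · rintro ⟨hb1, hc1⟩; exact ⟨⟨hc1, fun ha1 => hab w ha1 hb1⟩, hb1⟩
  rw [e5] at e4
  -- decompose the main filter
  have hfilter : (Finset.univ.filter fun w : Fin K → ZMod 2 => g w = 1)
      = (Finset.univ.filter fun w : Fin K → ZMod 2 =>
          (∀ k ∈ T, w k = 1) ∧ ¬ ∀ k ∈ Q, w k = 1)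
        ∪ ((Finset.univ.filter fun w : Fin K → ZMod 2 =>
          (∀ k ∈ T, w k = 0) ∧ ¬ ∀ k ∈ Q, w k = 1)
        ∪ (Finset.univ.filter fun w : Fin K → ZMod 2 =>
          ((∀ k ∈ Q, w k = 1) ∧ ¬ ∀ k ∈ T, w k = 1) ∧ ¬ ∀ k ∈ T, w k = 0)) := by
    rw [← Finset.filter_or, ← Finset.filter_or]
    exact Finset.filter_congr fun w _ => key w
  have hdisj23 : Disjoint
      (Finset.univ.filter fun w : Fin K → ZMod 2 =>
        (∀ k ∈ T, w k = 0) ∧ ¬ ∀ k ∈ Q, w k = 1)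
      (Finset.univ.filter fun w : Fin K → ZMod 2 =>
        ((∀ k ∈ Q, w k = 1) ∧ ¬ ∀ k ∈ T, w k = 1) ∧ ¬ ∀ k ∈ T, w k = 0) := by
    rw [Finset.disjoint_left]
    intro w hw1 hw2
    simp only [mem_filter, mem_univ, true_and] at hw1 hw2
    exact hw2.2 hw1.1
  have hdisj1 : Disjoint
      (Finset.univ.filter fun w : Fin K → ZMod 2 =>
        (∀ k ∈ T, w k = 1) ∧ ¬ ∀ k ∈ Q, w k = 1)
      ((Finset.univ.filter fun w : Fin K → ZMod 2 =>
        (∀ k ∈ T, w k = 0) ∧ ¬ ∀ k ∈ Q, w k = 1)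
      ∪ (Finset.univ.filter fun w : Fin K → ZMod 2 =>
        ((∀ k ∈ Q, w k = 1) ∧ ¬ ∀ k ∈ T, w k = 1) ∧ ¬ ∀ k ∈ T, w k = 0)) := by
    rw [Finset.disjoint_union_right, Finset.disjoint_left, Finset.disjoint_left]
    constructor
    · intro w hw1 hw2
      simp only [mem_filter, mem_univ, true_and] at hw1 hw2
      exact hab w hw1.1 hw2.1
    · intro w hw1 hw2
      simp only [mem_filter, mem_univ, true_and] at hw1 hw2
      exact hw2.1.2 hw1.1
  have hcard : (Finset.univ.filter fun w : Fin K → ZMod 2 => g w = 1).card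
      = (Finset.univ.filter fun w : Fin K → ZMod 2 =>
          (∀ k ∈ T, w k = 1) ∧ ¬ ∀ k ∈ Q, w k = 1).card
        + ((Finset.univ.filter fun w : Fin K → ZMod 2 =>
          (∀ k ∈ T, w k = 0) ∧ ¬ ∀ k ∈ Q, w k = 1).card
        + (Finset.univ.filter fun w : Fin K → ZMod 2 =>
          ((∀ k ∈ Q, w k = 1) ∧ ¬ ∀ k ∈ T, w k = 1) ∧ ¬ ∀ k ∈ T, w k = 0).card) := by
    rw [hfilter, Finset.card_union_of_disjoint hdisj1,
      Finset.card_union_of_disjoint hdisj23]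
  -- pass to ℚ
  rw [hKt, hK2t] at e1 e2 e3
  rw [hK2t] at e4
  have hNQ : ((Finset.univ.filter fun w : Fin K → ZMod 2 => g w = 1).card : ℚ)
      = 3 * 2 ^ (m + t) - 4 * 2 ^ m := by
    have q1 : ((2 : ℚ) ^ m + (Finset.univ.filter fun w : Fin K → ZMod 2 =>
        (∀ k ∈ T, w k = 1) ∧ ¬ ∀ k ∈ Q, w k = 1).card) = 2 ^ (m + t) := by
      exact_mod_cast congrArg (Nat.cast : ℕ → ℚ) e1
    have q2 : ((2 : ℚ) ^ m + (Finset.univ.filter fun w : Fin K → ZMod 2 =>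
        (∀ k ∈ T, w k = 0) ∧ ¬ ∀ k ∈ Q, w k = 1).card) = 2 ^ (m + t) := by
      exact_mod_cast congrArg (Nat.cast : ℕ → ℚ) e2
    have q3 : ((2 : ℚ) ^ m + (Finset.univ.filter fun w : Fin K → ZMod 2 =>
        (∀ k ∈ Q, w k = 1) ∧ ¬ ∀ k ∈ T, w k = 1).card) = 2 ^ (m + t) := by
      exact_mod_cast congrArg (Nat.cast : ℕ → ℚ) e3
    have q4 : ((2 : ℚ) ^ m + (Finset.univ.filter fun w : Fin K → ZMod 2 =>
        ((∀ k ∈ Q, w k = 1) ∧ ¬ ∀ k ∈ T, w k = 1) ∧ ¬ ∀ k ∈ T, w k = 0).card)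
        = ((Finset.univ.filter fun w : Fin K → ZMod 2 =>
            (∀ k ∈ Q, w k = 1) ∧ ¬ ∀ k ∈ T, w k = 1).card : ℚ) := by
      exact_mod_cast congrArg (Nat.cast : ℕ → ℚ) e4
    have qc : ((Finset.univ.filter fun w : Fin K → ZMod 2 => g w = 1).card : ℚ)
        = ((Finset.univ.filter fun w : Fin K → ZMod 2 =>
            (∀ k ∈ T, w k = 1) ∧ ¬ ∀ k ∈ Q, w k = 1).card : ℚ)
          + (((Finset.univ.filter fun w : Fin K → ZMod 2 =>
            (∀ k ∈ T, w k = 0) ∧ ¬ ∀ k ∈ Q, w k = 1).card : ℚ)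
          + ((Finset.univ.filter fun w : Fin K → ZMod 2 =>
            ((∀ k ∈ Q, w k = 1) ∧ ¬ ∀ k ∈ T, w k = 1) ∧ ¬ ∀ k ∈ T, w k = 0).card : ℚ)) := by
      exact_mod_cast congrArg (Nat.cast : ℕ → ℚ) hcard
    linarith [q1, q2, q3, q4, qc]
  -- final arithmetic
  rw [hNQ, hm]
  rw [h1e, h2e, zpow_add₀ (two_ne_zero), zpow_neg, zpow_natCast, zpow_one]
  have h2t : (2 : ℚ) ^ t ≠ 0 := by positivity
  have h2m : (2 : ℚ) ^ m ≠ 0 := by positivity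
  rw [pow_add, show m + 2 * t = m + t + t from by ring, pow_add, pow_add]
  field_simp
  ring
end
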